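/- arXiv:2302.13128 — 12 statements merged into one kernel-verified Lean document; each statement's English description precedes it below -/
import Mathlib

section
/- Let T : H ⇉ H be a set-valued operator and Σ : H → H a linear invertible operator such that the resolvents J_{Σ⁻¹T} := (I + Σ⁻¹T)⁻¹ and J_{ΣT⁻¹} := (I + ΣT⁻¹)⁻¹ are everywhere defined and single-valued. Then for all x ∈ H, J_{ΣT⁻¹}(x) = x − Σ J_{Σ⁻¹T}(Σ⁻¹x). -/
/-- Generalized Moreau decomposition: J_{Σ T⁻¹}(x) = x − Σ J_{Σ⁻¹T}(Σ⁻¹ x). -/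
theorem stmt1 {H : Type} [NormedAddCommGroup H] [InnerProductSpace ℝ H]
    (T : H → Set H) (e : H ≃ₗ[ℝ] H)
    (J₁ J₂ : H → H)
    -- J₁ = J_{Σ⁻¹T} is everywhere defined and single-valued:
    -- v = J₁ x  ⇔  x − v ∈ Σ⁻¹T(v)  ⇔  Σ(x − v) ∈ T(v)
    (hJ₁ : ∀ x v : H, e (x - v) ∈ T v ↔ v = J₁ x)
    -- J₂ = J_{Σ T⁻¹} is everywhere defined and single-valued:
    -- w = J₂ x  ⇔  x − w ∈ Σ T⁻¹(w)  ⇔  Σ⁻¹(x − w) ∈ T⁻¹(w)  ⇔  w ∈ T(Σ⁻¹(x − w))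
    (hJ₂ : ∀ x w : H, w ∈ T (e.symm (x - w)) ↔ w = J₂ x) :
    ∀ x : H, J₂ x = x - e (J₁ (e.symm x)) := by
  intro x
  set v := J₁ (e.symm x)
  have hv : x - e v ∈ T v := by
    simpa only [map_sub, e.apply_symm_apply] using (hJ₁ (e.symm x) v).mpr rfl
  -- With w := x - Σ v we have Σ⁻¹(x - w) = v, so `hv` is the inclusion characterising J₂ x.
  refine ((hJ₂ x (x - e v)).mp ?_).symm
  rwa [sub_sub_cancel, e.symm_apply_apply]
end

section
/- Let M : H → H be a bounded linear self-adjoint positive semi-definite operator that is an admissible preconditioner for T : H ⇉ H (i.e., J := (M+T)⁻¹M is single-valued with full domain). If M⁻¹T is M-monotone, then J is M-firmly non-expansive: for all u₁, u₂ ∈ H, ‖Ju₁ − Ju₂‖²_M + ‖(u₁ − Ju₁) − (u₂ − Ju₂)‖²_M ≤ ‖u₁ − u₂‖²_M. -/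
open scoped InnerProductSpace

/-! Write `u₁ - u₂ = p + q` with `p = J u₁ - J u₂` and `q = (u₁ - J u₁) - (u₂ - J u₂)`. Since
`M (u - J u) ∈ T (J u)`, `M`-monotonicity of `M⁻¹T` gives `0 ≤ ⟨p, q⟩_M`, and expanding the
`M`-seminorm of `p + q` (using the symmetry of `M`) yields the claim. -/

namespace LinearMap.IsSymmetric

variable {E : Type*} [NormedAddCommGroup E] [InnerProductSpace ℝ E] {M : E →ₗ[ℝ] E}

theorem inner_map_add_add_self (hM : M.IsSymmetric) (p q : E) :
    ⟪M (p + q), p + q⟫_ℝ = ⟪M p, p⟫_ℝ + 2 * ⟪M p, q⟫_ℝ + ⟪M q, q⟫_ℝ := by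
  have hsym : ⟪M q, p⟫_ℝ = ⟪M p, q⟫_ℝ := (hM q p).trans (real_inner_comm _ _)
  rw [map_add, inner_add_left, inner_add_right, inner_add_right, hsym]
  ring

theorem inner_map_self_add_le_of_nonneg (hM : M.IsSymmetric) {p q : E}
    (hpq : 0 ≤ ⟪M p, q⟫_ℝ) :
    ⟪M p, p⟫_ℝ + ⟪M q, q⟫_ℝ ≤ ⟪M (p + q), p + q⟫_ℝ := by
  rw [hM.inner_map_add_add_self]
  linarith

end LinearMap.IsSymmetric

theorem stmt2_general {H : Type} [NormedAddCommGroup H] [InnerProductSpace ℝ H] [CompleteSpace H]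
    (M : H →L[ℝ] H) (hsa : IsSelfAdjoint M)
    (T : H → Set H) (J : H → H)
    -- J = (M+T)⁻¹M has full domain:  M x ∈ (M + T)(J x)
    (hJ : ∀ x : H, M x - M (J x) ∈ T (J x))
    -- M⁻¹T is M-monotone:
    (hmono : ∀ u₁ v₁ u₂ v₂ : H, M v₁ ∈ T u₁ → M v₂ ∈ T u₂ →
      0 ≤ ⟪M (u₁ - u₂), v₁ - v₂⟫_ℝ) :
    ∀ u₁ u₂ : H,
      ⟪M (J u₁ - J u₂), J u₁ - J u₂⟫_ℝ +
        ⟪M ((u₁ - J u₁) - (u₂ - J u₂)), (u₁ - J u₁) - (u₂ - J u₂)⟫_ℝ ≤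
      ⟪M (u₁ - u₂), u₁ - u₂⟫_ℝ := by
  intro u₁ u₂
  have hres : ∀ x, M (x - J x) ∈ T (J x) := fun x => by simpa only [map_sub] using hJ x
  have hsplit : u₁ - u₂ = (J u₁ - J u₂) + ((u₁ - J u₁) - (u₂ - J u₂)) := by abel
  rw [hsplit]
  exact hsa.isSymmetric.inner_map_self_add_le_of_nonneg (hmono _ _ _ _ (hres u₁) (hres u₂))

/-- If M⁻¹T is M-monotone, the preconditioned resolvent J = (M+T)⁻¹M is M-firmly
non-expansive. -/
theorem stmt2 {H : Type} [NormedAddCommGroup H] [InnerProductSpace ℝ H] [CompleteSpace H]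
    (M : H →L[ℝ] H) (hsa : IsSelfAdjoint M) (hpsd : ∀ x : H, 0 ≤ ⟪M x, x⟫_ℝ)
    (T : H → Set H) (J : H → H)
    -- J = (M+T)⁻¹M has full domain:  M x ∈ (M + T)(J x)
    (hJ : ∀ x : H, M x - M (J x) ∈ T (J x))
    -- and is single-valued:
    (hJuniq : ∀ x v : H, M x - M v ∈ T v → v = J x)
    -- M⁻¹T is M-monotone:
    (hmono : ∀ u₁ v₁ u₂ v₂ : H, M v₁ ∈ T u₁ → M v₂ ∈ T u₂ →
      0 ≤ ⟪M (u₁ - u₂), v₁ - v₂⟫_ℝ) :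
    ∀ u₁ u₂ : H,
      ⟪M (J u₁ - J u₂), J u₁ - J u₂⟫_ℝ +
        ⟪M ((u₁ - J u₁) - (u₂ - J u₂)), (u₁ - J u₁) - (u₂ - J u₂)⟫_ℝ ≤
      ⟪M (u₁ - u₂), u₁ - u₂⟫_ℝ :=
  stmt2_general M hsa T J hJ hmono
end

section
/- Let (α_k), (β_k), (m_k) be sequences of non-negative reals with ∑_k m_k < ∞. If α_{k+1} ≤ (1 + m_k)α_k − β_k for all k, then (α_k) converges and ∑_k β_k < ∞. -/
/-!
Divide by the partial products `P n = ∏_{j<n} (1 + m j)`: the recursion becomes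
`α (n+1) / P (n+1) + β n / P (n+1) ≤ α n / P n`, so `α n / P n` is antitone and nonnegative,
hence convergent. Summability of `m` makes `P n` converge to the finite product `∏' (1 + m j)`,
so `α n = (α n / P n) * P n` converges, and
`β n ≤ (∏' (1 + m j)) * (α n / P n - α (n+1) / P (n+1))` is dominated by a telescoping series.
-/

open Filter Finset

theorem Antitone.summable_sub_succ {g : ℕ → ℝ} (hg : Antitone g) {b : ℝ} (hb : ∀ n, b ≤ g n) :
    Summable fun n => g n - g (n + 1) :=
  summable_of_sum_range_le (c := g 0 - b) (fun n => sub_nonneg.2 (hg n.le_succ)) fun n => by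
    rw [sum_range_sub']
    linarith [hb n]

theorem monotone_prod_range_one_add {m : ℕ → ℝ} (hm : ∀ k, 0 ≤ m k) :
    Monotone fun n => ∏ j ∈ range n, (1 + m j) :=
  (prod_mono_set_of_one_le fun j => le_add_of_nonneg_right (hm j)).comp range_mono

theorem add_div_mul_le_div_of_le_one_add_mul {a a' b m p : ℝ} (hp : 0 < p) (hm : 0 ≤ m)
    (h : a' ≤ (1 + m) * a - b) : (a' + b) / (p * (1 + m)) ≤ a / p := by
  rw [div_le_div_iff₀ (by positivity) hp]
  nlinarith

/-- Quasi-Fejér type lemma: if α_{k+1} ≤ (1+m_k)α_k − β_k with nonnegative sequences and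
∑ m_k < ∞, then (α_k) converges and ∑ β_k < ∞. -/
theorem stmt3 (α β m : ℕ → ℝ)
    (hα : ∀ k, 0 ≤ α k) (hβ : ∀ k, 0 ≤ β k) (hm : ∀ k, 0 ≤ m k)
    (hsum : Summable m)
    (hrec : ∀ k, α (k + 1) ≤ (1 + m k) * α k - β k) :
    (∃ l : ℝ, Filter.Tendsto α Filter.atTop (nhds l)) ∧ Summable β := by
  set P : ℕ → ℝ := fun n => ∏ j ∈ range n, (1 + m j)
  have hP_lim : Tendsto P atTop (nhds (∏' j, (1 + m j))) :=
    (Real.multipliable_one_add_of_summable hsum).tendsto_prod_tprod_nat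
  have hP_mono : Monotone P := monotone_prod_range_one_add hm
  have hP_pos : ∀ n, 0 < P n := fun n =>
    zero_lt_one.trans_le (one_le_prod fun j _ => le_add_of_nonneg_right (hm j))
  set g : ℕ → ℝ := fun n => α n / P n
  have hg_descent : ∀ n, g (n + 1) + β n / P (n + 1) ≤ g n := fun n => by
    rw [← add_div, show P (n + 1) = P n * (1 + m n) from prod_range_succ _ _]
    exact add_div_mul_le_div_of_le_one_add_mul (hP_pos n) (hm n) (hrec n)
  have hg_nonneg : ∀ n, 0 ≤ g n := fun n => div_nonneg (hα n) (hP_pos n).le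
  have hg_anti : Antitone g := antitone_nat_of_succ_le fun n => by
    linarith [hg_descent n, div_nonneg (hβ n) (hP_pos (n + 1)).le]
  have hg_lim : Tendsto g atTop (nhds (⨅ n, g n)) :=
    tendsto_atTop_ciInf hg_anti ⟨0, Set.forall_mem_range.2 hg_nonneg⟩
  refine ⟨⟨(⨅ n, g n) * ∏' j, (1 + m j), ?_⟩, ?_⟩
  · refine (hg_lim.mul hP_lim).congr fun n => ?_
    exact div_mul_cancel₀ _ (hP_pos n).ne'
  · refine ((hg_anti.summable_sub_succ hg_nonneg).mul_left (∏' j, (1 + m j))).of_nonneg_of_le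
      hβ fun n => ?_
    calc β n ≤ P (n + 1) * (g n - g (n + 1)) :=
          (div_le_iff₀' (hP_pos (n + 1))).1 (by linarith [hg_descent n])
      _ ≤ (∏' j, (1 + m j)) * (g n - g (n + 1)) :=
          mul_le_mul_of_nonneg_right (hP_mono.ge_of_tendsto hP_lim _)
            (sub_nonneg.2 (hg_anti n.le_succ))
end

section
/- Let M : H → H be a bounded linear self-adjoint positive semi-definite operator with decomposition M = CC* (C bounded, injective), T : H ⇉ H such that (M+T)⁻¹ is L-Lipschitz and J := (M+T)⁻¹M is single-valued with full domain. Then for all u, ũ ∈ H, ‖Ju − Jũ‖ ≤ L √(‖M‖) ‖u − ũ‖_M. -/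
/-!
Write `w = u - v` and `M = C C*`. The Lipschitz property of `(M + T)⁻¹` applied at `M u` and `M v`
gives `‖J u - J v‖ ≤ L ‖M w‖`, and `‖M w‖ = ‖C (C* w)‖ ≤ ‖C‖ ‖C* w‖ = √‖M‖ √⟪M w, w⟫` since
`‖C* w‖² = ⟪M w, w⟫` and `‖C‖² = ‖C C*‖`. When `L < 0` the Lipschitz bound forces `M w = 0`,
so both sides vanish.
-/

open scoped InnerProductSpace

namespace ContinuousLinearMap

variable {H D : Type*} [NormedAddCommGroup H] [InnerProductSpace ℝ H] [CompleteSpace H]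
  [NormedAddCommGroup D] [InnerProductSpace ℝ D] [CompleteSpace D]

theorem norm_adjoint_apply_eq_sqrt_inner_comp_adjoint (C : D →L[ℝ] H) (x : H) :
    ‖adjoint C x‖ = √⟪(C ∘L adjoint C) x, x⟫_ℝ := by
  simpa only [adjoint_adjoint, RCLike.re_to_real] using
    apply_norm_eq_sqrt_inner_adjoint_left (adjoint C) x

theorem sqrt_norm_comp_adjoint (C : D →L[ℝ] H) : √‖C ∘L adjoint C‖ = ‖C‖ := by
  have h := norm_adjoint_comp_self (adjoint C)
  rw [adjoint_adjoint, LinearIsometryEquiv.norm_map] at h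
  rw [h, Real.sqrt_mul_self (norm_nonneg C)]

theorem norm_comp_adjoint_apply_le (C : D →L[ℝ] H) (x : H) :
    ‖(C ∘L adjoint C) x‖ ≤ √‖C ∘L adjoint C‖ * √⟪(C ∘L adjoint C) x, x⟫_ℝ := by
  rw [sqrt_norm_comp_adjoint, ← norm_adjoint_apply_eq_sqrt_inner_comp_adjoint]
  exact C.le_opNorm _

end ContinuousLinearMap

theorem stmt4_general {H D : Type} [NormedAddCommGroup H] [InnerProductSpace ℝ H] [CompleteSpace H]
    [NormedAddCommGroup D] [InnerProductSpace ℝ D] [CompleteSpace D]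
    (M : H →L[ℝ] H)
    (C : D →L[ℝ] H)
    (hdec : M = C.comp (ContinuousLinearMap.adjoint C))
    (T : H → Set H) (L : ℝ)
    -- (M+T)⁻¹ is L-Lipschitz on its graph: y ∈ (M+T)⁻¹ x  ⇔  x − M y ∈ T y
    (hLip : ∀ x₁ x₂ y₁ y₂ : H, x₁ - M y₁ ∈ T y₁ → x₂ - M y₂ ∈ T y₂ →
      ‖y₁ - y₂‖ ≤ L * ‖x₁ - x₂‖)
    (J : H → H)
    -- J = (M+T)⁻¹M is single-valued with full domain:
    (hJ : ∀ x : H, M x - M (J x) ∈ T (J x)) :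
    ∀ u v : H, ‖J u - J v‖ ≤ L * Real.sqrt ‖M‖ * Real.sqrt ⟪M (u - v), u - v⟫_ℝ := by
  intro u v
  have hJuv : ‖J u - J v‖ ≤ L * ‖M (u - v)‖ := by
    rw [map_sub]
    exact hLip _ _ _ _ (hJ u) (hJ v)
  rcases le_or_gt 0 L with hL | hL
  · calc ‖J u - J v‖ ≤ L * ‖M (u - v)‖ := hJuv
      _ ≤ L * (√‖M‖ * √⟪M (u - v), u - v⟫_ℝ) := by
        subst hdec
        gcongr
        exact C.norm_comp_adjoint_apply_le _
      _ = L * √‖M‖ * √⟪M (u - v), u - v⟫_ℝ := (mul_assoc _ _ _).symm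
  · have hMuv : M (u - v) = 0 :=
      norm_le_zero_iff.mp (by nlinarith [norm_nonneg (J u - J v), norm_nonneg (M (u - v))])
    simpa [hMuv] using hJuv

/-- If (M+T)⁻¹ is L-Lipschitz and M = CC* then J = (M+T)⁻¹M satisfies
‖Ju − Jv‖ ≤ L √‖M‖ ‖u − v‖_M. -/
theorem stmt4 {H D : Type} [NormedAddCommGroup H] [InnerProductSpace ℝ H] [CompleteSpace H]
    [NormedAddCommGroup D] [InnerProductSpace ℝ D] [CompleteSpace D]
    (M : H →L[ℝ] H) (hsa : IsSelfAdjoint M) (hpsd : ∀ x : H, 0 ≤ ⟪M x, x⟫_ℝ)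
    (C : D →L[ℝ] H) (hCinj : Function.Injective C)
    (hdec : M = C.comp (ContinuousLinearMap.adjoint C))
    (T : H → Set H) (L : ℝ)
    -- (M+T)⁻¹ is L-Lipschitz on its graph: y ∈ (M+T)⁻¹ x  ⇔  x − M y ∈ T y
    (hLip : ∀ x₁ x₂ y₁ y₂ : H, x₁ - M y₁ ∈ T y₁ → x₂ - M y₂ ∈ T y₂ →
      ‖y₁ - y₂‖ ≤ L * ‖x₁ - x₂‖)
    (J : H → H)
    -- J = (M+T)⁻¹M is single-valued with full domain:
    (hJ : ∀ x : H, M x - M (J x) ∈ T (J x)) :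
    ∀ u v : H, ‖J u - J v‖ ≤ L * Real.sqrt ‖M‖ * Real.sqrt ⟪M (u - v), u - v⟫_ℝ :=
  stmt4_general M C hdec T L hLip J hJ
end

section
/- Let T : H ⇉ H with zer T ≠ ∅, and let (M_k) be admissible preconditioners for T with M_k → M in operator norm and ∑_k ‖M_{k+1} − M_k‖ < ∞. Assume each M_k⁻¹T is M_k-monotone and each (M_k + T)⁻¹ is L-Lipschitz. Let u^{k+1} = (M_k + T)⁻¹ M_k u^k. Then (u^k) is bounded, (‖u^k − u*‖_{M_k}) converges for every fixed point u* of (M+T)⁻¹M, and ∑_k ‖u^{k+1} − u^k‖²_{M_k} < ∞. -/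
open scoped InnerProductSpace

/-!
Fix a zero `w` of `T` and let `a_k = ‖u^k - w‖²_{M_k}`. Monotonicity of `M_k⁻¹T` gives the Fejér
inequality `‖u^{k+1} - w‖²_{M_k} + ‖u^{k+1} - u^k‖²_{M_k} ≤ a_k`. Switching the metric to `M_{k+1}`
costs `‖M_{k+1} - M_k‖ ‖u^{k+1} - w‖²`, and the Lipschitz resolvent together with
`‖M x‖² ≤ ‖M‖ ‖x‖²_M` bounds `‖u^{k+1} - w‖²` by `L² C a_k`, where `C = sup_k ‖M_k‖`. Hence
`a_{k+1} + ‖u^{k+1} - u^k‖²_{M_k} ≤ (1 + L² C ‖M_{k+1} - M_k‖) a_k`, and such a quasi-Fejér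
sequence is bounded and convergent, with summable decrements.
-/

open Filter Topology Set

section QuasiFejer

variable {a d ε δ : ℕ → ℝ}

theorem le_mul_exp_sum_of_le_one_add_mul (ha : ∀ k, 0 ≤ a k)
    (h : ∀ k, a (k + 1) ≤ (1 + ε k) * a k) (k : ℕ) :
    a k ≤ a 0 * Real.exp (∑ j ∈ Finset.range k, ε j) := by
  induction k with
  | zero => simp
  | succ k ih =>
    calc a (k + 1) ≤ (1 + ε k) * a k := h k
      _ ≤ Real.exp (ε k) * (a 0 * Real.exp (∑ j ∈ Finset.range k, ε j)) := by
          gcongr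
          · exact ha k
          · linarith [Real.add_one_le_exp (ε k)]
      _ = a 0 * Real.exp (∑ j ∈ Finset.range (k + 1), ε j) := by
          rw [Finset.sum_range_succ, Real.exp_add]; ring

theorem exists_tendsto_of_le_add_summable (ha : ∀ k, 0 ≤ a k) (hδ : ∀ k, 0 ≤ δ k)
    (hδs : Summable δ) (h : ∀ k, a (k + 1) ≤ a k + δ k) :
    ∃ l, Tendsto a atTop (𝓝 l) := by
  set b : ℕ → ℝ := fun k => a k - ∑ j ∈ Finset.range k, δ j
  have hb_anti : Antitone b := antitone_nat_of_succ_le fun k => by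
    simp only [b, Finset.sum_range_succ]; linarith [h k]
  have hb_bdd : BddBelow (range b) := ⟨-∑' j, δ j, by
    rintro _ ⟨k, rfl⟩
    linarith [ha k, hδs.sum_le_tsum (Finset.range k) fun j _ => hδ j]⟩
  refine ⟨_, ((tendsto_atTop_ciInf hb_anti hb_bdd).add hδs.hasSum.tendsto_sum_nat).congr ?_⟩
  intro k; simp only [b, sub_add_cancel]

theorem summable_of_add_le_add_summable (ha : ∀ k, 0 ≤ a k) (hd : ∀ k, 0 ≤ d k)
    (hδ : ∀ k, 0 ≤ δ k) (hδs : Summable δ) (h : ∀ k, a (k + 1) + d k ≤ a k + δ k) :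
    Summable d := by
  have htelescope : ∀ n, ∑ k ∈ Finset.range n, d k + a n ≤ a 0 + ∑ k ∈ Finset.range n, δ k := by
    intro n
    induction n with
    | zero => simp
    | succ n ih => rw [Finset.sum_range_succ, Finset.sum_range_succ]; linarith [h n]
  refine summable_of_sum_range_le (c := a 0 + ∑' k, δ k) hd fun n => ?_
  linarith [htelescope n, ha n, hδs.sum_le_tsum (Finset.range n) fun j _ => hδ j]

theorem bddAbove_tendsto_summable_of_add_le_one_add_mul (ha : ∀ k, 0 ≤ a k)
    (hd : ∀ k, 0 ≤ d k) (hε : ∀ k, 0 ≤ ε k) (hεs : Summable ε)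
    (h : ∀ k, a (k + 1) + d k ≤ (1 + ε k) * a k) :
    BddAbove (range a) ∧ (∃ l, Tendsto a atTop (𝓝 l)) ∧ Summable d := by
  have hB : ∀ k, a k ≤ a 0 * Real.exp (∑' j, ε j) := fun k => by
    refine (le_mul_exp_sum_of_le_one_add_mul (ε := ε) ha (fun k => ?_) k).trans ?_
    · linarith [h k, hd k]
    · gcongr
      · exact ha 0
      · exact hεs.sum_le_tsum _ fun j _ => hε j
  set B := a 0 * Real.exp (∑' j, ε j)
  have hδ : ∀ k, 0 ≤ ε k * B := fun k => mul_nonneg (hε k) ((ha 0).trans (hB 0))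
  have hstep : ∀ k, a (k + 1) + d k ≤ a k + ε k * B := fun k => by
    nlinarith [h k, hB k, hε k]
  refine ⟨⟨B, by rintro _ ⟨k, rfl⟩; exact hB k⟩, ?_, ?_⟩
  · exact exists_tendsto_of_le_add_summable ha hδ (hεs.mul_right B) fun k => by
      linarith [hstep k, hd k]
  · exact summable_of_add_le_add_summable ha hd hδ (hεs.mul_right B) hstep

end QuasiFejer

namespace ContinuousLinearMap

variable {H : Type*} [NormedAddCommGroup H] [InnerProductSpace ℝ H] {A : H →L[ℝ] H}

theorem IsPositive.inner_apply_sq_le (hA : A.IsPositive) (x y : H) :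
    ⟪A x, y⟫_ℝ ^ 2 ≤ ⟪A x, x⟫_ℝ * ⟪A y, y⟫_ℝ := by
  have hquad : ∀ t : ℝ, 0 ≤ ⟪A y, y⟫_ℝ * (t * t) + 2 * ⟪A x, y⟫_ℝ * t + ⟪A x, x⟫_ℝ := by
    intro t
    have hsymm : ⟪A y, x⟫_ℝ = ⟪A x, y⟫_ℝ := by
      rw [hA.inner_left_eq_inner_right, real_inner_comm]
    have := hA.inner_nonneg_left (x + t • y)
    simp only [map_add, map_smul, inner_add_left, inner_add_right, real_inner_smul_left,
      real_inner_smul_right, hsymm] at this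
    linarith
  have := discrim_le_zero hquad
  rw [discrim] at this
  linarith

theorem IsPositive.norm_apply_sq_le (hA : A.IsPositive) (x : H) :
    ‖A x‖ ^ 2 ≤ ‖A‖ * ⟪A x, x⟫_ℝ := by
  rcases (norm_nonneg (A x)).eq_or_lt with hzero | hpos
  · rw [← hzero]; simpa using mul_nonneg (norm_nonneg A) (hA.inner_nonneg_left x)
  have hAA : ⟪A (A x), A x⟫_ℝ ≤ ‖A‖ * ‖A x‖ ^ 2 := by
    calc ⟪A (A x), A x⟫_ℝ ≤ ‖A (A x)‖ * ‖A x‖ := real_inner_le_norm _ _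
      _ ≤ ‖A‖ * ‖A x‖ * ‖A x‖ := by gcongr; exact A.le_opNorm _
      _ = ‖A‖ * ‖A x‖ ^ 2 := by ring
  have hcs := hA.inner_apply_sq_le x (A x)
  rw [real_inner_self_eq_norm_sq] at hcs
  refine le_of_mul_le_mul_right (a := ‖A x‖ ^ 2) ?_ (by positivity)
  calc ‖A x‖ ^ 2 * ‖A x‖ ^ 2 = (‖A x‖ ^ 2) ^ 2 := by ring
    _ ≤ ⟪A x, x⟫_ℝ * ⟪A (A x), A x⟫_ℝ := hcs
    _ ≤ ⟪A x, x⟫_ℝ * (‖A‖ * ‖A x‖ ^ 2) := by gcongr; exact hA.inner_nonneg_left x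
    _ = ‖A‖ * ⟪A x, x⟫_ℝ * ‖A x‖ ^ 2 := by ring

theorem inner_apply_self_le_add (A B : H →L[ℝ] H) (v : H) :
    ⟪B v, v⟫_ℝ ≤ ⟪A v, v⟫_ℝ + ‖B - A‖ * ‖v‖ ^ 2 := by
  have hdiff : ⟪(B - A) v, v⟫_ℝ ≤ ‖B - A‖ * ‖v‖ ^ 2 := by
    calc ⟪(B - A) v, v⟫_ℝ ≤ ‖(B - A) v‖ * ‖v‖ := real_inner_le_norm _ _
      _ ≤ ‖B - A‖ * ‖v‖ * ‖v‖ := by gcongr; exact (B - A).le_opNorm v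
      _ = ‖B - A‖ * ‖v‖ ^ 2 := by ring
  rw [sub_apply, inner_sub_left] at hdiff
  linarith

theorem IsPositive.inner_apply_add_self (hA : A.IsPositive) (v y : H) :
    ⟪A (v + y), v + y⟫_ℝ = ⟪A v, v⟫_ℝ + ⟪A y, y⟫_ℝ + 2 * ⟪A v, y⟫_ℝ := by
  have hsymm : ⟪A y, v⟫_ℝ = ⟪A v, y⟫_ℝ := by
    rw [hA.inner_left_eq_inner_right, real_inner_comm]
  simp only [map_add, inner_add_left, inner_add_right, hsymm]
  ring

end ContinuousLinearMap

theorem exists_norm_le_of_norm_succ_sub_le {E : Type*} [SeminormedAddCommGroup E] {u : ℕ → E}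
    (z : E) (K : ℝ) (h : ∀ k, ‖u (k + 1) - z‖ ≤ K) : ∃ R, ∀ k, ‖u k‖ ≤ R := by
  refine ⟨max ‖u 0‖ (‖z‖ + K), fun k => ?_⟩
  cases k with
  | zero => exact le_max_left _ _
  | succ k =>
    refine le_max_of_le_right ?_
    calc ‖u (k + 1)‖ = ‖z + (u (k + 1) - z)‖ := by rw [add_sub_cancel]
      _ ≤ ‖z‖ + K := (norm_add_le _ _).trans (by gcongr; exact h k)

section PreconditionedResolvent

variable {H : Type*} [NormedAddCommGroup H] [InnerProductSpace ℝ H]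
  {T : H → Set H} {A : H →L[ℝ] H} {x p w : H}

/-- `A⁻¹T` is `A`-monotone, where `v ∈ A⁻¹T u` is read as `A v ∈ T u`. -/
def PreconditionedMonotone (T : H → Set H) (A : H →L[ℝ] H) : Prop :=
  ∀ u₁ v₁ u₂ v₂ : H, A v₁ ∈ T u₁ → A v₂ ∈ T u₂ → 0 ≤ ⟪A (u₁ - u₂), v₁ - v₂⟫_ℝ

/-- `(A + T)⁻¹` is `L`-Lipschitz, where `y ∈ (A + T)⁻¹ x` is read as `x - A y ∈ T y`. -/
def ResolventLipschitzWith (T : H → Set H) (A : H →L[ℝ] H) (L : ℝ) : Prop :=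
  ∀ x₁ x₂ y₁ y₂ : H, x₁ - A y₁ ∈ T y₁ → x₂ - A y₂ ∈ T y₂ → ‖y₁ - y₂‖ ≤ L * ‖x₁ - x₂‖

theorem PreconditionedMonotone.fejer (hT : PreconditionedMonotone T A) (hA : A.IsPositive)
    (hp : A x - A p ∈ T p) (hw : 0 ∈ T w) :
    ⟪A (p - w), p - w⟫_ℝ + ⟪A (p - x), p - x⟫_ℝ ≤ ⟪A (x - w), x - w⟫_ℝ := by
  have hmon := hT p (x - p) w 0 (by rwa [map_sub]) (by rwa [map_zero])
  rw [sub_zero] at hmon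
  have hexpand := hA.inner_apply_add_self (p - w) (x - p)
  rw [sub_add_sub_cancel'] at hexpand
  have hflip : ⟪A (x - p), x - p⟫_ℝ = ⟪A (p - x), p - x⟫_ℝ := by
    rw [← neg_sub p x, map_neg, inner_neg_neg]
  linarith

theorem ResolventLipschitzWith.sq_norm_sub_le {L : ℝ} (hT : ResolventLipschitzWith T A L)
    (hA : A.IsPositive) (hp : A x - A p ∈ T p) (hw : 0 ∈ T w) :
    ‖p - w‖ ^ 2 ≤ L ^ 2 * ‖A‖ * ⟪A (x - w), x - w⟫_ℝ := by
  have hlip : ‖p - w‖ ≤ L * ‖A (x - w)‖ := by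
    rw [map_sub]; exact hT _ _ p w hp (by rwa [sub_self])
  calc ‖p - w‖ ^ 2 ≤ (L * ‖A (x - w)‖) ^ 2 := pow_le_pow_left₀ (norm_nonneg _) hlip 2
    _ = L ^ 2 * ‖A (x - w)‖ ^ 2 := mul_pow _ _ 2
    _ ≤ L ^ 2 * (‖A‖ * ⟪A (x - w), x - w⟫_ℝ) := by gcongr; exact hA.norm_apply_sq_le _
    _ = L ^ 2 * ‖A‖ * ⟪A (x - w), x - w⟫_ℝ := (mul_assoc _ _ _).symm

theorem PreconditionedMonotone.fejer_of_change_of_metric {L C : ℝ}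
    (hT : PreconditionedMonotone T A) (hLip : ResolventLipschitzWith T A L) (hA : A.IsPositive)
    (hAC : ‖A‖ ≤ C) (hp : A x - A p ∈ T p) (hw : 0 ∈ T w) (B : H →L[ℝ] H) :
    ⟪B (p - w), p - w⟫_ℝ + ⟪A (p - x), p - x⟫_ℝ
      ≤ (1 + L ^ 2 * C * ‖B - A‖) * ⟪A (x - w), x - w⟫_ℝ := by
  have hchange := ContinuousLinearMap.inner_apply_self_le_add A B (p - w)
  have hfejer := hT.fejer hA hp hw
  have hdist : ‖B - A‖ * ‖p - w‖ ^ 2 ≤ ‖B - A‖ * (L ^ 2 * C * ⟪A (x - w), x - w⟫_ℝ) := by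
    gcongr
    refine (hLip.sq_norm_sub_le hA hp hw).trans ?_
    gcongr
    exact hA.inner_nonneg_left _
  linarith

end PreconditionedResolvent

theorem stmt5_general {H : Type} [NormedAddCommGroup H] [InnerProductSpace ℝ H] [CompleteSpace H]
    (T : H → Set H) (hzer : ∃ z : H, (0 : H) ∈ T z)
    (M : ℕ → H →L[ℝ] H) (Mlim : H →L[ℝ] H)
    (hsa : ∀ k, IsSelfAdjoint (M k)) (hpsd : ∀ k, ∀ x : H, 0 ≤ ⟪M k x, x⟫_ℝ)
    (hconv : Filter.Tendsto M Filter.atTop (nhds Mlim))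
    (hsum : Summable (fun k => ‖M (k + 1) - M k‖))
    -- each M_k⁻¹ T is M_k-monotone:
    (hmono : ∀ k, ∀ u₁ v₁ u₂ v₂ : H, M k v₁ ∈ T u₁ → M k v₂ ∈ T u₂ →
      0 ≤ ⟪M k (u₁ - u₂), v₁ - v₂⟫_ℝ)
    (L : ℝ)
    -- each (M_k + T)⁻¹ is L-Lipschitz:
    (hLip : ∀ k, ∀ x₁ x₂ y₁ y₂ : H, x₁ - M k y₁ ∈ T y₁ → x₂ - M k y₂ ∈ T y₂ →
      ‖y₁ - y₂‖ ≤ L * ‖x₁ - x₂‖)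
    -- J k = (M_k + T)⁻¹ M_k single-valued with full domain (admissibility):
    (J : ℕ → H → H)
    (hJ : ∀ k x, M k x - M k (J k x) ∈ T (J k x))
    -- J^M = (M + T)⁻¹ M single-valued with full domain (admissibility of the limit):
    (Jlim : H → H)
    (hJlim : ∀ x, Mlim x - Mlim (Jlim x) ∈ T (Jlim x))
    (u : ℕ → H) (hu : ∀ k, u (k + 1) = J k (u k)) :
    (∃ R : ℝ, ∀ k, ‖u k‖ ≤ R) ∧
    (∀ ustar : H, Jlim ustar = ustar →
      ∃ l : ℝ, Filter.Tendsto (fun k => Real.sqrt ⟪M k (u k - ustar), u k - ustar⟫_ℝ)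
        Filter.atTop (nhds l)) ∧
    Summable (fun k => ⟪M k (u (k + 1) - u k), u (k + 1) - u k⟫_ℝ) := by
  obtain ⟨z, hz⟩ := hzer
  obtain ⟨C, hC⟩ := hconv.norm.bddAbove_range
  have hMC : ∀ k, ‖M k‖ ≤ C := fun k => hC ⟨k, rfl⟩
  have hC₀ : 0 ≤ C := (norm_nonneg _).trans (hMC 0)
  have hpos : ∀ k, (M k).IsPositive := fun k =>
    (ContinuousLinearMap.isPositive_iff' _).2 ⟨hsa k, hpsd k⟩
  have hiter : ∀ k, M k (u k) - M k (u (k + 1)) ∈ T (u (k + 1)) := fun k => hu k ▸ hJ k (u k)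
  have hquasiFejer : ∀ w, 0 ∈ T w →
      BddAbove (range fun k => ⟪M k (u k - w), u k - w⟫_ℝ) ∧
      (∃ l, Tendsto (fun k => ⟪M k (u k - w), u k - w⟫_ℝ) atTop (𝓝 l)) ∧
      Summable (fun k => ⟪M k (u (k + 1) - u k), u (k + 1) - u k⟫_ℝ) := fun w hw =>
    bddAbove_tendsto_summable_of_add_le_one_add_mul (fun k => hpsd k _) (fun k => hpsd k _)
      (fun k => by positivity) (hsum.mul_left (L ^ 2 * C)) fun k =>
      PreconditionedMonotone.fejer_of_change_of_metric (hmono k) (hLip k) (hpos k) (hMC k)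
        (hiter k) hw (M (k + 1))
  obtain ⟨⟨B, hB⟩, -, hsummable⟩ := hquasiFejer z hz
  refine ⟨exists_norm_le_of_norm_succ_sub_le z √(L ^ 2 * C * B) fun k => ?_,
    fun ustar hfix => ?_, hsummable⟩
  · refine Real.le_sqrt_of_sq_le ?_
    calc ‖u (k + 1) - z‖ ^ 2 ≤ L ^ 2 * ‖M k‖ * ⟪M k (u k - z), u k - z⟫_ℝ :=
          ResolventLipschitzWith.sq_norm_sub_le (hLip k) (hpos k) (hiter k) hz
      _ ≤ L ^ 2 * C * B := by
          gcongr
          · exact hpsd k _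
          · exact hMC k
          · exact hB ⟨k, rfl⟩
  · obtain ⟨-, ⟨l, hl⟩, -⟩ := hquasiFejer ustar (by simpa [hfix] using hJlim ustar)
    exact ⟨√l, hl.sqrt⟩

/-- Main lemma for the degenerate variable metric proximal point algorithm:
boundedness of the iterates, convergence of ‖u^k − u*‖_{M_k}, and summability of
‖u^{k+1} − u^k‖²_{M_k}. -/
theorem stmt5 {H : Type} [NormedAddCommGroup H] [InnerProductSpace ℝ H] [CompleteSpace H]
    (T : H → Set H) (hzer : ∃ z : H, (0 : H) ∈ T z)
    (M : ℕ → H →L[ℝ] H) (Mlim : H →L[ℝ] H)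
    (hsa : ∀ k, IsSelfAdjoint (M k)) (hpsd : ∀ k, ∀ x : H, 0 ≤ ⟪M k x, x⟫_ℝ)
    (hsalim : IsSelfAdjoint Mlim) (hpsdlim : ∀ x : H, 0 ≤ ⟪Mlim x, x⟫_ℝ)
    (hconv : Filter.Tendsto M Filter.atTop (nhds Mlim))
    (hsum : Summable (fun k => ‖M (k + 1) - M k‖))
    -- each M_k⁻¹ T is M_k-monotone:
    (hmono : ∀ k, ∀ u₁ v₁ u₂ v₂ : H, M k v₁ ∈ T u₁ → M k v₂ ∈ T u₂ →
      0 ≤ ⟪M k (u₁ - u₂), v₁ - v₂⟫_ℝ)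
    (L : ℝ)
    -- each (M_k + T)⁻¹ is L-Lipschitz:
    (hLip : ∀ k, ∀ x₁ x₂ y₁ y₂ : H, x₁ - M k y₁ ∈ T y₁ → x₂ - M k y₂ ∈ T y₂ →
      ‖y₁ - y₂‖ ≤ L * ‖x₁ - x₂‖)
    -- J k = (M_k + T)⁻¹ M_k single-valued with full domain (admissibility):
    (J : ℕ → H → H)
    (hJ : ∀ k x, M k x - M k (J k x) ∈ T (J k x))
    (hJuniq : ∀ k x v, M k x - M k v ∈ T v → v = J k x)
    -- J^M = (M + T)⁻¹ M single-valued with full domain (admissibility of the limit):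
    (Jlim : H → H)
    (hJlim : ∀ x, Mlim x - Mlim (Jlim x) ∈ T (Jlim x))
    (hJlimuniq : ∀ x v, Mlim x - Mlim v ∈ T v → v = Jlim x)
    (u : ℕ → H) (hu : ∀ k, u (k + 1) = J k (u k)) :
    (∃ R : ℝ, ∀ k, ‖u k‖ ≤ R) ∧
    (∀ ustar : H, Jlim ustar = ustar →
      ∃ l : ℝ, Filter.Tendsto (fun k => Real.sqrt ⟪M k (u k - ustar), u k - ustar⟫_ℝ)
        Filter.atTop (nhds l)) ∧
    Summable (fun k => ⟪M k (u (k + 1) - u k), u (k + 1) - u k⟫_ℝ) :=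
  stmt5_general T hzer M Mlim hsa hpsd hconv hsum hmono L hLip J hJ Jlim hJlim u hu
end

section
/- If M and M' are bounded linear self-adjoint positive semi-definite operators on H and J^M, J^{M'} denote the corresponding preconditioned resolvents of T with the same set of fixed points, and Mu* = Mu** for two fixed points u*, u** of J^M := (M+T)⁻¹M (single-valued), then u* = u**. -/
open scoped InnerProductSpace

theorem resolvent_eq_of_map_eq {H G : Type*} [Sub G] (M : H → G) (T : H → Set G) (J : H → H)
    (hJ : ∀ x : H, M x - M (J x) ∈ T (J x))
    (hJuniq : ∀ x v : H, M x - M v ∈ T v → v = J x)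
    {x y : H} (hM : M x = M y) : J x = J y :=
  (hJuniq x (J y) (hM ▸ hJ y)).symm

theorem stmt7_general {H : Type} [NormedAddCommGroup H] [InnerProductSpace ℝ H]
    (M : H →L[ℝ] H)
    (T : H → Set H) (J : H → H)
    -- J = (M+T)⁻¹M has full domain and is single-valued:
    (hJ : ∀ x : H, M x - M (J x) ∈ T (J x))
    (hJuniq : ∀ x v : H, M x - M v ∈ T v → v = J x)
    (ustar ustar2 : H)
    (hfix1 : J ustar = ustar) (hfix2 : J ustar2 = ustar2)
    (hMeq : M ustar = M ustar2) :
    ustar = ustar2 := by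
  calc ustar = J ustar := hfix1.symm
    _ = J ustar2 := resolvent_eq_of_map_eq M T J hJ hJuniq hMeq
    _ = ustar2 := hfix2

/-- Two fixed points u*, u** of the single-valued preconditioned resolvent
J^M = (M+T)⁻¹M with M u* = M u** coincide. -/
theorem stmt7 {H : Type} [NormedAddCommGroup H] [InnerProductSpace ℝ H] [CompleteSpace H]
    (M : H →L[ℝ] H) (hsa : IsSelfAdjoint M) (hpsd : ∀ x : H, 0 ≤ ⟪M x, x⟫_ℝ)
    (T : H → Set H) (J : H → H)
    -- J = (M+T)⁻¹M has full domain and is single-valued: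
    (hJ : ∀ x : H, M x - M (J x) ∈ T (J x))
    (hJuniq : ∀ x v : H, M x - M v ∈ T v → v = J x)
    (ustar ustar2 : H)
    (hfix1 : J ustar = ustar) (hfix2 : J ustar2 = ustar2)
    (hMeq : M ustar = M ustar2) :
    ustar = ustar2 :=
  stmt7_general M T J hJ hJuniq ustar ustar2 hfix1 hfix2 hMeq
end

section
/- Let T : H ⇉ H be maximal monotone with zer T ≠ ∅. Let (M_k) and M be admissible preconditioners for T with M_k → M and ∑_k ‖M_{k+1} − M_k‖ < ∞, and suppose each (M_k + T)⁻¹ is L-Lipschitz. Then the iterates u^{k+1} = (M_k + T)⁻¹ M_k u^k converge weakly to some u ∈ zer T. -/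
/-!
For a zero `z` of `T`, monotonicity makes the iterates Fejér monotone in the metric `M k` up to
the drift `‖M (k+1) - M k‖`, and the Lipschitz resolvents bound `‖u (k+1) - z‖²` by the
`M k`-distance of `u k` to `z`. The drift is summable, so `⟪M k (u k - z), u k - z⟫` converges and
the increments `⟪M k (u k - u (k+1)), u k - u (k+1)⟫` are summable. Hence `u` is bounded and the
residuals `M k (u k - u (k+1)) ∈ T (u (k+1))` tend to `0`, so, the graph of a maximal monotone
operator being weak-strong closed, every weak cluster point of `u` is a zero of `T`.
For two cluster points `l₁, l₂`, the convergence of these quadratic forms makes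
`⟪u k, Mlim (l₁ - l₂)⟫` converge, so `⟪Mlim (l₁ - l₂), l₁ - l₂⟫ = 0`, hence `Mlim l₁ = Mlim l₂`,
and `l₁ = l₂` because `(Mlim + T)⁻¹ Mlim` is single-valued. A bounded sequence with a single weak
cluster point converges weakly to it.
-/

open scoped InnerProductSpace

def WeakConv {H : Type} [NormedAddCommGroup H] [InnerProductSpace ℝ H]
    (x : ℕ → H) (l : H) : Prop :=
  ∀ w : H, Filter.Tendsto (fun n => ⟪x n, w⟫_ℝ) Filter.atTop (nhds ⟪l, w⟫_ℝ)

open Filter Topology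

section RealSequences

open Finset

theorem exists_tendsto_and_summable_of_succ_add_le_add {a g e : ℕ → ℝ} (ha : ∀ k, 0 ≤ a k)
    (hg : ∀ k, 0 ≤ g k) (he : ∀ k, 0 ≤ e k) (hes : Summable e)
    (h : ∀ k, a (k + 1) + g k ≤ a k + e k) :
    (∃ E, Tendsto a atTop (𝓝 E)) ∧ Summable g := by
  set b : ℕ → ℝ := fun n => a n + ∑ k ∈ range n, g k - ∑ k ∈ range n, e k
  have hb_anti : Antitone b := antitone_nat_of_succ_le fun n => by
    simp only [b, sum_range_succ]
    linarith [h n]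
  have hb_le : ∀ n, b n ≤ a 0 := fun n => by simpa [b] using hb_anti (Nat.zero_le n)
  have he_le : ∀ n, ∑ k ∈ range n, e k ≤ ∑' k, e k := fun n => hes.sum_le_tsum _ fun k _ => he k
  have hgs : Summable g := summable_of_sum_range_le (c := a 0 + ∑' k, e k) hg fun n => by
    have hbn := hb_le n
    simp only [b] at hbn
    linarith [he_le n, ha n]
  have hb_bdd : BddBelow (Set.range b) := ⟨-∑' k, e k, by
    rintro _ ⟨n, rfl⟩
    simp only [b]
    linarith [he_le n, ha n, sum_nonneg fun k (_ : k ∈ range n) => hg k]⟩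
  have hlim := ((tendsto_atTop_ciInf hb_anti hb_bdd).sub hgs.hasSum.tendsto_sum_nat).add
    hes.hasSum.tendsto_sum_nat
  refine ⟨⟨_, hlim.congr fun n => ?_⟩, hgs⟩
  simp only [b]
  ring

theorem exists_tendsto_and_summable_of_succ_add_le_mul {a g c : ℕ → ℝ} (ha : ∀ k, 0 ≤ a k)
    (hg : ∀ k, 0 ≤ g k) (hc : ∀ k, 0 ≤ c k) (hcs : Summable c)
    (h : ∀ k, a (k + 1) + g k ≤ (1 + c k) * a k) :
    (∃ E, Tendsto a atTop (𝓝 E)) ∧ Summable g := by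
  set B := a 0 * Real.exp (∑' k, c k)
  have hB : ∀ n, a n ≤ B := fun n => by
    have hgr := discrete_gronwall (b := 0) (ha 0)
      (fun k _ => by simp only [Pi.zero_apply, add_zero]; linarith [h k, hg k])
      (fun k _ => hc k) (fun _ _ => le_rfl) (Nat.zero_le n)
    simp only [Pi.zero_apply, sum_const_zero, add_zero, ← range_eq_Ico] at hgr
    exact hgr.trans (mul_le_mul_of_nonneg_left
      (Real.exp_le_exp.2 (hcs.sum_le_tsum _ fun k _ => hc k)) (ha 0))
  refine exists_tendsto_and_summable_of_succ_add_le_add ha hg (fun k => mul_nonneg (hc k) ?_)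
    (hcs.mul_right B) fun k => by nlinarith [h k, hB k, hc k]
  exact (ha 0).trans (hB 0)

end RealSequences

section HilbertSpace

variable {H : Type} [NormedAddCommGroup H] [InnerProductSpace ℝ H]

theorem LinearMap.IsSymmetric.inner_map_add_add {T : H →ₗ[ℝ] H} (hT : T.IsSymmetric) (a b : H) :
    ⟪T (a + b), a + b⟫_ℝ = ⟪T a, a⟫_ℝ + 2 * ⟪T a, b⟫_ℝ + ⟪T b, b⟫_ℝ := by
  have hba : ⟪T b, a⟫_ℝ = ⟪T a, b⟫_ℝ := by rw [hT, real_inner_comm]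
  simp only [map_add, inner_add_left, inner_add_right, hba]
  ring

namespace ContinuousLinearMap.IsPositive

theorem inner_apply_sq_le_s8 {A : H →L[ℝ] H} (hA : A.IsPositive) (x y : H) :
    ⟪A x, y⟫_ℝ ^ 2 ≤ ⟪A x, x⟫_ℝ * ⟪A y, y⟫_ℝ := by
  have hquad : ∀ t : ℝ, 0 ≤ ⟪A y, y⟫_ℝ * (t * t) + 2 * ⟪A x, y⟫_ℝ * t + ⟪A x, x⟫_ℝ := fun t => by
    have h := hA.inner_nonneg_left (x + t • y)
    have hexp := hA.isSymmetric.inner_map_add_add x (t • y)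
    simp only [ContinuousLinearMap.coe_coe, map_smul, real_inner_smul_left,
      real_inner_smul_right] at hexp
    linarith
  have h := discrim_le_zero hquad
  rw [discrim] at h
  linarith

theorem norm_apply_sq_le_s8 {A : H →L[ℝ] H} (hA : A.IsPositive) (x : H) :
    ‖A x‖ ^ 2 ≤ ‖A‖ * ⟪A x, x⟫_ℝ := by
  rcases eq_or_ne (A x) 0 with h | h
  · simp [h]
  have hAAx : ⟪A (A x), A x⟫_ℝ ≤ ‖A‖ * ‖A x‖ ^ 2 := calc
    _ ≤ ‖A (A x)‖ * ‖A x‖ := real_inner_le_norm _ _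
    _ ≤ ‖A‖ * ‖A x‖ * ‖A x‖ := by gcongr; exact A.le_opNorm _
    _ = _ := by ring
  have hcs := hA.inner_apply_sq_le_s8 x (A x)
  rw [real_inner_self_eq_norm_sq] at hcs
  refine le_of_mul_le_mul_right ?_ (by positivity : 0 < ‖A x‖ ^ 2)
  calc ‖A x‖ ^ 2 * ‖A x‖ ^ 2 = (‖A x‖ ^ 2) ^ 2 := by ring
    _ ≤ ⟪A x, x⟫_ℝ * ⟪A (A x), A x⟫_ℝ := hcs
    _ ≤ ⟪A x, x⟫_ℝ * (‖A‖ * ‖A x‖ ^ 2) := by gcongr; exact hA.inner_nonneg_left x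
    _ = _ := by ring

theorem apply_eq_zero_of_inner_eq_zero {A : H →L[ℝ] H} (hA : A.IsPositive) {x : H}
    (h : ⟪A x, x⟫_ℝ = 0) : A x = 0 := by
  have hsq := hA.norm_apply_sq_le_s8 x
  rw [h, mul_zero] at hsq
  exact norm_eq_zero.1 (pow_eq_zero_iff two_ne_zero |>.1 (le_antisymm hsq (sq_nonneg _)))

end ContinuousLinearMap.IsPositive

theorem ContinuousLinearMap.inner_apply_self_le_add_s8 (A B : H →L[ℝ] H) (x : H) :
    ⟪B x, x⟫_ℝ ≤ ⟪A x, x⟫_ℝ + ‖B - A‖ * ‖x‖ ^ 2 := by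
  have h : ⟪(B - A) x, x⟫_ℝ ≤ ‖B - A‖ * ‖x‖ ^ 2 := calc
    _ ≤ ‖(B - A) x‖ * ‖x‖ := real_inner_le_norm _ _
    _ ≤ ‖B - A‖ * ‖x‖ * ‖x‖ := by gcongr; exact (B - A).le_opNorm x
    _ = _ := by ring
  rw [sub_apply, inner_sub_left] at h
  linarith

theorem tendsto_apply_zero_of_summable_inner {A : ℕ → H →L[ℝ] H} {x : ℕ → H} {C : ℝ}
    (hA : ∀ k, (A k).IsPositive) (hC : ∀ k, ‖A k‖ ≤ C)
    (h : Summable fun k => ⟪A k (x k), x k⟫_ℝ) : Tendsto (fun k => A k (x k)) atTop (𝓝 0) := by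
  refine squeeze_zero_norm (a := fun k => √(C * ⟪A k (x k), x k⟫_ℝ)) (fun k => ?_) ?_
  · refine Real.le_sqrt_of_sq_le ?_
    exact ((hA k).norm_apply_sq_le_s8 _).trans
      (mul_le_mul_of_nonneg_right (hC k) ((hA k).inner_nonneg_left _))
  · simpa using (h.tendsto_atTop_zero.const_mul C).sqrt

def IsMonotoneOperator (T : H → Set H) : Prop :=
  ∀ u₁ v₁ u₂ v₂ : H, v₁ ∈ T u₁ → v₂ ∈ T u₂ → 0 ≤ ⟪u₁ - u₂, v₁ - v₂⟫_ℝ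

def IsMaximalMonotone (T : H → Set H) : Prop :=
  IsMonotoneOperator T ∧
    ∀ u v : H, (∀ u' v' : H, v' ∈ T u' → 0 ≤ ⟪u - u', v - v'⟫_ℝ) → v ∈ T u

theorem tendsto_inner_zero_of_norm_le {x y : ℕ → H} {R : ℝ} (hR : ∀ n, ‖x n‖ ≤ R)
    (hy : Tendsto y atTop (𝓝 0)) : Tendsto (fun n => ⟪x n, y n⟫_ℝ) atTop (𝓝 0) := by
  refine squeeze_zero_norm (fun n => ?_) (by simpa using hy.norm.const_mul R)
  exact (norm_inner_le_norm _ _).trans (mul_le_mul_of_nonneg_right (hR n) (norm_nonneg _))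

theorem WeakConv.tendsto_inner {x y : ℕ → H} {a b : H} {R : ℝ} (hx : WeakConv x a)
    (hR : ∀ n, ‖x n‖ ≤ R) (hy : Tendsto y atTop (𝓝 b)) :
    Tendsto (fun n => ⟪x n, y n⟫_ℝ) atTop (𝓝 ⟪a, b⟫_ℝ) := by
  have h := (hx b).add (tendsto_inner_zero_of_norm_le hR (tendsto_sub_nhds_zero_iff.2 hy))
  simpa [inner_sub_right] using h

def IsWeakClusterPt (u : ℕ → H) (l : H) : Prop :=
  ∃ φ : ℕ → ℕ, StrictMono φ ∧ WeakConv (u ∘ φ) l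

theorem IsWeakClusterPt.comp_succ {u : ℕ → H} {l : H} (h : IsWeakClusterPt u l) :
    IsWeakClusterPt (fun k => u (k + 1)) l := by
  obtain ⟨φ, hφ, hw⟩ := h
  have hpos : ∀ j, 1 ≤ φ (j + 1) := fun j => Nat.zero_lt_of_lt (hφ j.succ_pos)
  refine ⟨fun j => φ (j + 1) - 1, fun i j hij => ?_, fun w => ?_⟩
  · show φ (i + 1) - 1 < φ (j + 1) - 1
    have := hφ (Nat.add_lt_add_right hij 1)
    have := hpos i
    omega
  · simpa [Function.comp_def, Nat.sub_add_cancel (hpos _)] using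
      (hw w).comp (tendsto_add_atTop_nat 1)

theorem IsWeakClusterPt.inner_eq_of_tendsto {u : ℕ → H} {l w : H} {c : ℝ}
    (h : IsWeakClusterPt u l) (hc : Tendsto (fun n => ⟪u n, w⟫_ℝ) atTop (𝓝 c)) :
    ⟪l, w⟫_ℝ = c := by
  obtain ⟨φ, hφ, hw⟩ := h
  exact tendsto_nhds_unique (hw w) (hc.comp hφ.tendsto_atTop)

theorem exists_isWeakClusterPt_of_bounded [CompleteSpace H] {u : ℕ → H} {R : ℝ}
    (hR : ∀ n, ‖u n‖ ≤ R) : ∃ l, IsWeakClusterPt u l := by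
  -- sequential Banach–Alaoglu in the separable closed span `K` of `u`, then Riesz in `K`
  set K := (Submodule.span ℝ (Set.range u)).topologicalClosure
  have hK : ∀ n, u n ∈ K :=
    fun n => Submodule.le_topologicalClosure _ (Submodule.subset_span ⟨n, rfl⟩)
  have : CompleteSpace K := (Submodule.isClosed_topologicalClosure _).completeSpace_coe
  have : TopologicalSpace.SeparableSpace K :=
    ((Set.countable_range u).isSeparable.span.closure).separableSpace
  let f : ℕ → K →L[ℝ] ℝ := fun n => (innerSL ℝ (u n)).comp K.subtypeL
  have hf : ∀ n, f n ∈ Metric.closedBall (0 : K →L[ℝ] ℝ) R := fun n => by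
    rw [mem_closedBall_zero_iff (E := K →L[ℝ] ℝ)]
    refine ContinuousLinearMap.opNorm_le_bound _ ((norm_nonneg _).trans (hR n)) fun w => ?_
    exact (norm_inner_le_norm _ _).trans (mul_le_mul_of_nonneg_right (hR n) (norm_nonneg _))
  obtain ⟨g, -, φ, hφ, hg⟩ := WeakDual.isSeqCompact_closedBall ℝ K 0 R
    (x := fun n => StrongDual.toWeakDual (f n)) hf
  refine ⟨(InnerProductSpace.toDual ℝ K).symm (WeakDual.toStrongDual g), φ, hφ, fun w => ?_⟩
  have hlim := tendsto_iff_forall_eval_tendsto_topDualPairing.1 hg (K.orthogonalProjectionOnto w)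
  have hproj : ∀ v : K, ⟪(v : H), w⟫_ℝ = ⟪v, K.orthogonalProjectionOnto w⟫_ℝ := fun v =>
    (K.inner_orthogonalProjectionOnto_eq_of_mem_left v w).symm
  simp only [Function.comp_apply] at hlim
  rw [hproj, InnerProductSpace.toDual_symm_apply]
  convert hlim using 2 with n
  · exact hproj ⟨_, hK _⟩
  · rfl

theorem weakConv_of_forall_isWeakClusterPt_eq [CompleteSpace H] {u : ℕ → H} {l : H} {R : ℝ}
    (hR : ∀ n, ‖u n‖ ≤ R) (h : ∀ l', IsWeakClusterPt u l' → l' = l) : WeakConv u l := by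
  intro w
  by_contra hne
  obtain ⟨s, hs, hfreq⟩ := not_tendsto_iff_exists_frequently_notMem.1 hne
  obtain ⟨ψ, hψ, hψs⟩ := extraction_of_frequently_atTop hfreq
  obtain ⟨l', φ, hφ, hw⟩ := exists_isWeakClusterPt_of_bounded fun n => hR (ψ n)
  obtain rfl : l' = l := h l' ⟨ψ ∘ φ, hψ.comp hφ, hw⟩
  obtain ⟨n, hn⟩ := ((hw w).eventually hs).exists
  exact hψs (φ n) hn

theorem IsMaximalMonotone.mem_of_weakConv_of_tendsto {T : H → Set H}
    (hT : IsMaximalMonotone T) {x y : ℕ → H} {a b : H} {R : ℝ} (hxy : ∀ n, y n ∈ T (x n))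
    (hx : WeakConv x a) (hR : ∀ n, ‖x n‖ ≤ R) (hy : Tendsto y atTop (𝓝 b)) : b ∈ T a := by
  refine hT.2 a b fun u' v' hv' => ?_
  have hx' : WeakConv (fun n => x n - u') (a - u') := fun w => by
    simpa [inner_sub_left] using (hx w).sub_const ⟪u', w⟫_ℝ
  have hR' : ∀ n, ‖x n - u'‖ ≤ R + ‖u'‖ := fun n => (norm_sub_le _ _).trans (by linarith [hR n])
  exact ge_of_tendsto' (hx'.tendsto_inner hR' (hy.sub_const v'))
    fun n => hT.1 _ _ _ _ (hxy n) hv'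

theorem IsMaximalMonotone.zero_mem_of_isWeakClusterPt {T : H → Set H}
    (hT : IsMaximalMonotone T) {u r : ℕ → H} {R : ℝ} {l : H} (hR : ∀ n, ‖u n‖ ≤ R)
    (hr : ∀ k, r k ∈ T (u (k + 1))) (hr0 : Tendsto r atTop (𝓝 0)) (hl : IsWeakClusterPt u l) :
    0 ∈ T l := by
  obtain ⟨φ, hφ, hw⟩ := hl.comp_succ
  exact hT.mem_of_weakConv_of_tendsto (fun n => hr (φ n)) hw (fun n => hR _)
    (hr0.comp hφ.tendsto_atTop)

theorem IsMonotoneOperator.fejer_step {T : H → Set H} (hT : IsMonotoneOperator T)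
    {A : H →L[ℝ] H} (hA : (A : H →ₗ[ℝ] H).IsSymmetric) {x y z : H}
    (hy : A (x - y) ∈ T y) (hz : 0 ∈ T z) :
    ⟪A (y - z), y - z⟫_ℝ + ⟪A (x - y), x - y⟫_ℝ ≤ ⟪A (x - z), x - z⟫_ℝ := by
  have hmon : 0 ≤ ⟪A (x - y), y - z⟫_ℝ := by
    simpa [real_inner_comm] using hT _ _ _ _ hy hz
  have hexp := hA.inner_map_add_add (x - y) (y - z)
  simp only [ContinuousLinearMap.coe_coe, sub_add_sub_cancel] at hexp
  linarith

theorem norm_sub_sq_le_of_lipschitz {T : H → Set H} {A : H →L[ℝ] H} {L : ℝ}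
    (hLip : ∀ x₁ x₂ y₁ y₂ : H, x₁ - A y₁ ∈ T y₁ → x₂ - A y₂ ∈ T y₂ →
      ‖y₁ - y₂‖ ≤ L * ‖x₁ - x₂‖)
    (hA : A.IsPositive) {x y z : H} (hy : A (x - y) ∈ T y) (hz : 0 ∈ T z) :
    ‖y - z‖ ^ 2 ≤ L ^ 2 * ‖A‖ * ⟪A (x - z), x - z⟫_ℝ := by
  have hlip : ‖y - z‖ ≤ L * ‖A (x - z)‖ := by
    rw [map_sub]
    exact hLip _ _ _ _ (by rwa [← map_sub]) (by rwa [sub_self])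
  calc ‖y - z‖ ^ 2 ≤ (L * ‖A (x - z)‖) ^ 2 := pow_le_pow_left₀ (norm_nonneg _) hlip 2
    _ = L ^ 2 * ‖A (x - z)‖ ^ 2 := mul_pow _ _ _
    _ ≤ L ^ 2 * (‖A‖ * ⟪A (x - z), x - z⟫_ℝ) := by gcongr; exact hA.norm_apply_sq_le_s8 _
    _ = _ := by ring

section VariableMetric

variable {T : H → Set H} {M : ℕ → H →L[ℝ] H} {u : ℕ → H} {L C : ℝ} {z : H}

theorem variableMetric_fejer_step (hT : IsMonotoneOperator T)
    (hLip : ∀ k, ∀ x₁ x₂ y₁ y₂ : H, x₁ - M k y₁ ∈ T y₁ → x₂ - M k y₂ ∈ T y₂ →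
      ‖y₁ - y₂‖ ≤ L * ‖x₁ - x₂‖)
    (hM : ∀ k, (M k).IsPositive) (hC : ∀ k, ‖M k‖ ≤ C)
    (hstep : ∀ k, M k (u k - u (k + 1)) ∈ T (u (k + 1))) (hz : 0 ∈ T z) (k : ℕ) :
    ⟪M (k + 1) (u (k + 1) - z), u (k + 1) - z⟫_ℝ + ⟪M k (u k - u (k + 1)), u k - u (k + 1)⟫_ℝ ≤
      (1 + L ^ 2 * C * ‖M (k + 1) - M k‖) * ⟪M k (u k - z), u k - z⟫_ℝ := by
  have hdrift := (M k).inner_apply_self_le_add_s8 (M (k + 1)) (u (k + 1) - z)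
  have hfejer := hT.fejer_step (hM k).isSymmetric (hstep k) hz
  have hlip : ‖u (k + 1) - z‖ ^ 2 ≤ L ^ 2 * C * ⟪M k (u k - z), u k - z⟫_ℝ :=
    (norm_sub_sq_le_of_lipschitz (hLip k) (hM k) (hstep k) hz).trans <| by
      gcongr
      exacts [(hM k).inner_nonneg_left _, hC k]
  nlinarith [mul_le_mul_of_nonneg_left hlip (norm_nonneg (M (k + 1) - M k))]

theorem variableMetric_quasiFejer (hT : IsMonotoneOperator T)
    (hLip : ∀ k, ∀ x₁ x₂ y₁ y₂ : H, x₁ - M k y₁ ∈ T y₁ → x₂ - M k y₂ ∈ T y₂ →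
      ‖y₁ - y₂‖ ≤ L * ‖x₁ - x₂‖)
    (hM : ∀ k, (M k).IsPositive) (hC : ∀ k, ‖M k‖ ≤ C)
    (hsum : Summable fun k => ‖M (k + 1) - M k‖)
    (hstep : ∀ k, M k (u k - u (k + 1)) ∈ T (u (k + 1))) (hz : 0 ∈ T z) :
    (∃ E, Tendsto (fun k => ⟪M k (u k - z), u k - z⟫_ℝ) atTop (𝓝 E)) ∧
      Summable fun k => ⟪M k (u k - u (k + 1)), u k - u (k + 1)⟫_ℝ := by
  have hC0 : 0 ≤ C := (norm_nonneg _).trans (hC 0)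
  exact exists_tendsto_and_summable_of_succ_add_le_mul (fun k => (hM k).inner_nonneg_left _)
    (fun k => (hM k).inner_nonneg_left _) (fun k => by positivity) (hsum.mul_left _)
    (variableMetric_fejer_step hT hLip hM hC hstep hz)

theorem variableMetric_exists_forall_norm_le
    (hLip : ∀ k, ∀ x₁ x₂ y₁ y₂ : H, x₁ - M k y₁ ∈ T y₁ → x₂ - M k y₂ ∈ T y₂ →
      ‖y₁ - y₂‖ ≤ L * ‖x₁ - x₂‖)
    (hM : ∀ k, (M k).IsPositive) (hC : ∀ k, ‖M k‖ ≤ C)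
    (hstep : ∀ k, M k (u k - u (k + 1)) ∈ T (u (k + 1))) (hz : 0 ∈ T z) {E : ℝ}
    (hE : Tendsto (fun k => ⟪M k (u k - z), u k - z⟫_ℝ) atTop (𝓝 E)) :
    ∃ R, ∀ k, ‖u k‖ ≤ R := by
  obtain ⟨B, hB⟩ := hE.bddAbove_range
  refine ⟨max ‖u 0‖ (‖z‖ + √(L ^ 2 * C * B)), fun k => ?_⟩
  cases k with
  | zero => exact le_max_left _ _
  | succ k =>
    have hsq : ‖u (k + 1) - z‖ ^ 2 ≤ L ^ 2 * C * B :=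
      (norm_sub_sq_le_of_lipschitz (hLip k) (hM k) (hstep k) hz).trans <|
        mul_le_mul (by gcongr; exact hC k) (hB ⟨k, rfl⟩) ((hM k).inner_nonneg_left _)
          (mul_nonneg (sq_nonneg L) ((norm_nonneg _).trans (hC k)))
    have hsqrt := Real.abs_le_sqrt hsq
    rw [abs_norm] at hsqrt
    linarith [norm_le_insert' (u (k + 1)) z, le_max_right ‖u 0‖ (‖z‖ + √(L ^ 2 * C * B))]

end VariableMetric

theorem exists_tendsto_inner_apply_sub {M : ℕ → H →L[ℝ] H} {Mlim : H →L[ℝ] H} {u : ℕ → H}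
    {R E₁ E₂ : ℝ} {l₁ l₂ : H} (hM : ∀ k, (M k : H →ₗ[ℝ] H).IsSymmetric)
    (hconv : Tendsto M atTop (𝓝 Mlim)) (hR : ∀ n, ‖u n‖ ≤ R)
    (h₁ : Tendsto (fun k => ⟪M k (u k - l₁), u k - l₁⟫_ℝ) atTop (𝓝 E₁))
    (h₂ : Tendsto (fun k => ⟪M k (u k - l₂), u k - l₂⟫_ℝ) atTop (𝓝 E₂)) :
    ∃ c, Tendsto (fun k => ⟪u k, Mlim (l₁ - l₂)⟫_ℝ) atTop (𝓝 c) := by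
  have happ : ∀ x, Tendsto (fun k => M k x) atTop (𝓝 (Mlim x)) := fun x =>
    ((ContinuousLinearMap.apply ℝ H x).continuous.tendsto Mlim).comp hconv
  have hsplit : ∀ k, ⟪u k, Mlim (l₁ - l₂)⟫_ℝ = (⟪M k (u k - l₂), u k - l₂⟫_ℝ -
      ⟪M k (u k - l₁), u k - l₁⟫_ℝ - ⟪M k (l₁ - l₂), l₁ - l₂⟫_ℝ) / 2 + ⟪M k l₁, l₁ - l₂⟫_ℝ -
      ⟪u k, M k (l₁ - l₂) - Mlim (l₁ - l₂)⟫_ℝ := fun k => by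
    have hexp := (hM k).inner_map_add_add (u k - l₁) (l₁ - l₂)
    have hsym := (hM k) (u k) (l₁ - l₂)
    simp only [ContinuousLinearMap.coe_coe, sub_add_sub_cancel] at hexp hsym
    have hshift : ⟪M k (u k - l₁), l₁ - l₂⟫_ℝ = ⟪M k (u k), l₁ - l₂⟫_ℝ - ⟪M k l₁, l₁ - l₂⟫_ℝ := by
      rw [map_sub, inner_sub_left]
    rw [inner_sub_right (u k), ← hsym]
    linarith
  have hd : Tendsto (fun k => ⟪M k (l₁ - l₂), l₁ - l₂⟫_ℝ) atTop
      (𝓝 ⟪Mlim (l₁ - l₂), l₁ - l₂⟫_ℝ) := (happ _).inner tendsto_const_nhds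
  have hl₁d : Tendsto (fun k => ⟪M k l₁, l₁ - l₂⟫_ℝ) atTop (𝓝 ⟪Mlim l₁, l₁ - l₂⟫_ℝ) :=
    (happ _).inner tendsto_const_nhds
  have hres := tendsto_inner_zero_of_norm_le hR (tendsto_sub_nhds_zero_iff.2 (happ (l₁ - l₂)))
  exact ⟨_, (((((h₂.sub h₁).sub hd).div_const 2).add hl₁d).sub hres).congr fun k =>
    (hsplit k).symm⟩

theorem apply_sub_eq_zero_of_isWeakClusterPt {M : ℕ → H →L[ℝ] H} {Mlim : H →L[ℝ] H}
    {u : ℕ → H} {R E₁ E₂ : ℝ} {l₁ l₂ : H} (hM : ∀ k, (M k : H →ₗ[ℝ] H).IsSymmetric)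
    (hMlim : Mlim.IsPositive) (hconv : Tendsto M atTop (𝓝 Mlim)) (hR : ∀ n, ‖u n‖ ≤ R)
    (h₁ : Tendsto (fun k => ⟪M k (u k - l₁), u k - l₁⟫_ℝ) atTop (𝓝 E₁))
    (h₂ : Tendsto (fun k => ⟪M k (u k - l₂), u k - l₂⟫_ℝ) atTop (𝓝 E₂))
    (hl₁ : IsWeakClusterPt u l₁) (hl₂ : IsWeakClusterPt u l₂) : Mlim (l₁ - l₂) = 0 := by
  obtain ⟨c, hc⟩ := exists_tendsto_inner_apply_sub hM hconv hR h₁ h₂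
  refine hMlim.apply_eq_zero_of_inner_eq_zero ?_
  rw [real_inner_comm, inner_sub_left, hl₁.inner_eq_of_tendsto hc, hl₂.inner_eq_of_tendsto hc,
    sub_self]

end HilbertSpace

theorem stmt8_general {H : Type} [NormedAddCommGroup H] [InnerProductSpace ℝ H] [CompleteSpace H]
    (T : H → Set H)
    -- T monotone:
    (hTmono : ∀ u₁ v₁ u₂ v₂ : H, v₁ ∈ T u₁ → v₂ ∈ T u₂ → 0 ≤ ⟪u₁ - u₂, v₁ - v₂⟫_ℝ)
    -- T maximal:
    (hTmax : ∀ u v : H, (∀ u' v' : H, v' ∈ T u' → 0 ≤ ⟪u - u', v - v'⟫_ℝ) → v ∈ T u)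
    (hzer : ∃ z : H, (0 : H) ∈ T z)
    (M : ℕ → H →L[ℝ] H) (Mlim : H →L[ℝ] H)
    (hsa : ∀ k, IsSelfAdjoint (M k)) (hpsd : ∀ k, ∀ x : H, 0 ≤ ⟪M k x, x⟫_ℝ)
    (hsalim : IsSelfAdjoint Mlim) (hpsdlim : ∀ x : H, 0 ≤ ⟪Mlim x, x⟫_ℝ)
    (hconv : Filter.Tendsto M Filter.atTop (nhds Mlim))
    (hsum : Summable (fun k => ‖M (k + 1) - M k‖))
    (L : ℝ)
    -- each (M_k + T)⁻¹ is L-Lipschitz: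
    (hLip : ∀ k, ∀ x₁ x₂ y₁ y₂ : H, x₁ - M k y₁ ∈ T y₁ → x₂ - M k y₂ ∈ T y₂ →
      ‖y₁ - y₂‖ ≤ L * ‖x₁ - x₂‖)
    -- admissibility: J k = (M_k + T)⁻¹ M_k single-valued with full domain:
    (J : ℕ → H → H)
    (hJ : ∀ k x, M k x - M k (J k x) ∈ T (J k x))
    (Jlim : H → H)
    (hJlimuniq : ∀ x v, Mlim x - Mlim v ∈ T v → v = Jlim x)
    (u : ℕ → H) (hu : ∀ k, u (k + 1) = J k (u k)) :
    ∃ l : H, (0 : H) ∈ T l ∧ WeakConv u l := by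
  obtain ⟨z₀, hz₀⟩ := hzer
  have hM : ∀ k, (M k).IsPositive := fun k => (M k).isPositive_iff' |>.2 ⟨hsa k, hpsd k⟩
  have hstep : ∀ k, M k (u k - u (k + 1)) ∈ T (u (k + 1)) := fun k => by
    simpa only [hu, map_sub] using hJ k (u k)
  obtain ⟨C, hC⟩ : ∃ C, ∀ k, ‖M k‖ ≤ C := hconv.norm.bddAbove_range.imp fun _ h k => h ⟨k, rfl⟩
  have hQ := fun z (hz : 0 ∈ T z) => variableMetric_quasiFejer hTmono hLip hM hC hsum hstep hz
  obtain ⟨⟨E₀, hE₀⟩, hgap⟩ := hQ z₀ hz₀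
  obtain ⟨R, hR⟩ := variableMetric_exists_forall_norm_le hLip hM hC hstep hz₀ hE₀
  have hzero : ∀ l, IsWeakClusterPt u l → 0 ∈ T l := fun l =>
    IsMaximalMonotone.zero_mem_of_isWeakClusterPt ⟨hTmono, hTmax⟩ hR hstep
      (tendsto_apply_zero_of_summable_inner hM hC hgap)
  obtain ⟨l, hl⟩ := exists_isWeakClusterPt_of_bounded hR
  refine ⟨l, hzero l hl, weakConv_of_forall_isWeakClusterPt_eq hR fun l' hl' => ?_⟩
  obtain ⟨⟨E', hE'⟩, -⟩ := hQ l' (hzero l' hl')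
  obtain ⟨⟨E, hE⟩, -⟩ := hQ l (hzero l hl)
  have hMl : Mlim (l' - l) = 0 := apply_sub_eq_zero_of_isWeakClusterPt
    (fun k => (hM k).isSymmetric) (Mlim.isPositive_iff' |>.2 ⟨hsalim, hpsdlim⟩) hconv hR hE' hE
    hl' hl
  have hl'J : l' = Jlim l := hJlimuniq l l' <| by
    rw [← map_sub, ← neg_sub, map_neg, hMl, neg_zero]
    exact hzero l' hl'
  rw [hl'J, ← hJlimuniq l l (by simpa using hzero l hl)]

/-- Weak convergence of the degenerate variable metric proximal point algorithm
for a maximal monotone operator T. -/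
theorem stmt8 {H : Type} [NormedAddCommGroup H] [InnerProductSpace ℝ H] [CompleteSpace H]
    (T : H → Set H)
    -- T monotone:
    (hTmono : ∀ u₁ v₁ u₂ v₂ : H, v₁ ∈ T u₁ → v₂ ∈ T u₂ → 0 ≤ ⟪u₁ - u₂, v₁ - v₂⟫_ℝ)
    -- T maximal:
    (hTmax : ∀ u v : H, (∀ u' v' : H, v' ∈ T u' → 0 ≤ ⟪u - u', v - v'⟫_ℝ) → v ∈ T u)
    (hzer : ∃ z : H, (0 : H) ∈ T z)
    (M : ℕ → H →L[ℝ] H) (Mlim : H →L[ℝ] H)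
    (hsa : ∀ k, IsSelfAdjoint (M k)) (hpsd : ∀ k, ∀ x : H, 0 ≤ ⟪M k x, x⟫_ℝ)
    (hsalim : IsSelfAdjoint Mlim) (hpsdlim : ∀ x : H, 0 ≤ ⟪Mlim x, x⟫_ℝ)
    (hconv : Filter.Tendsto M Filter.atTop (nhds Mlim))
    (hsum : Summable (fun k => ‖M (k + 1) - M k‖))
    (L : ℝ)
    -- each (M_k + T)⁻¹ is L-Lipschitz:
    (hLip : ∀ k, ∀ x₁ x₂ y₁ y₂ : H, x₁ - M k y₁ ∈ T y₁ → x₂ - M k y₂ ∈ T y₂ →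
      ‖y₁ - y₂‖ ≤ L * ‖x₁ - x₂‖)
    -- admissibility: J k = (M_k + T)⁻¹ M_k single-valued with full domain:
    (J : ℕ → H → H)
    (hJ : ∀ k x, M k x - M k (J k x) ∈ T (J k x))
    (hJuniq : ∀ k x v, M k x - M k v ∈ T v → v = J k x)
    (Jlim : H → H)
    (hJlim : ∀ x, Mlim x - Mlim (Jlim x) ∈ T (Jlim x))
    (hJlimuniq : ∀ x v, Mlim x - Mlim v ∈ T v → v = Jlim x)
    (u : ℕ → H) (hu : ∀ k, u (k + 1) = J k (u k)) :
    ∃ l : H, (0 : H) ∈ T l ∧ WeakConv u l :=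
  stmt8_general T hTmono hTmax hzer M Mlim hsa hpsd hsalim hpsdlim hconv hsum L hLip J hJ Jlim
    hJlimuniq u hu
end

section
/- Let A, B : H ⇉ H be maximal monotone with zer(A+B) ≠ ∅, and let (t_k) be a sequence of positive reals with t_k → t > 0 and ∑_k |t_{k+1} − t_k| < ∞. Then for the non-stationary Douglas–Rachford iteration w^{k+1} = w^k + J_{t_k B}(2 J_{t_k A} w^k − w^k) − J_{t_k A} w^k, the sequence (J_{t_k A} w^k) converges weakly to some x ∈ zer(A+B). -/
open scoped InnerProductSpace

/-!
Along the iteration the stepsizes settle at `t`, so the resolvents `J_{t_k A}`, `J_{t_k B}`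
converge pointwise (`‖J_s x - J_r x‖ ≤ |s - r| / r * ‖x - J_r x‖`) to resolvents at `t`;
maximality survives the limit. If `a ∈ A z` and `-a ∈ B z`, the point `z + t_k a` is fixed by
the `k`-th Douglas–Rachford step, which is firmly nonexpansive; these anchors move by a summable
amount, so `‖w k - (z + t a)‖` converges and `w (k + 1) - w k → 0`. Hence the limiting
Douglas–Rachford step has vanishing residual along `w`, and passing to the limit in the
monotonicity inequalities of `A` and `B` shows that every weak cluster point `u` of `w` is of
the form `z + t a` as above, with `J_{tA} w k ⇀ J_{tA} u = z` along the same subsequence.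
Opial's lemma then gives `w k ⇀ u`, and `J_{t_k A} w k - J_{tA} w k → 0` strongly.
-/

open Filter Topology

section Resolvent

variable {H : Type*} [NormedAddCommGroup H] [InnerProductSpace ℝ H]

def MonotoneOp (M : H → Set H) : Prop :=
  ∀ u₁ v₁ u₂ v₂ : H, v₁ ∈ M u₁ → v₂ ∈ M u₂ → 0 ≤ ⟪u₁ - u₂, v₁ - v₂⟫_ℝ

def MaximalOp (M : H → Set H) : Prop :=
  ∀ u v : H, (∀ u' v' : H, v' ∈ M u' → 0 ≤ ⟪u - u', v - v'⟫_ℝ) → v ∈ M u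

/-- `J` is the resolvent `(I + s M)⁻¹`. -/
def IsResolvent (M : H → Set H) (s : ℝ) (J : H → H) : Prop :=
  ∀ x, s⁻¹ • (x - J x) ∈ M (J x)

variable {M : H → Set H} {s r : ℝ} {J J' : H → H}

theorem MonotoneOp.norm_sub_sq_le_inner (hM : MonotoneOp M) (hs : 0 < s) {x y u v : H}
    (hu : s⁻¹ • (x - u) ∈ M u) (hv : s⁻¹ • (y - v) ∈ M v) :
    ‖u - v‖ ^ 2 ≤ ⟪u - v, x - y⟫_ℝ := by
  have h := hM u _ v _ hu hv
  rw [← smul_sub, real_inner_smul_right, show x - u - (y - v) = (x - y) - (u - v) by abel,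
    inner_sub_right, real_inner_self_eq_norm_sq] at h
  nlinarith [inv_pos.2 hs]

theorem MonotoneOp.norm_sub_le_of_mem (hM : MonotoneOp M) (hs : 0 < s) (hr : 0 < r)
    {x u v : H} (hu : s⁻¹ • (x - u) ∈ M u) (hv : r⁻¹ • (x - v) ∈ M v) :
    ‖u - v‖ ≤ |s - r| / r * ‖x - v‖ := by
  have h := hM u _ v _ hu hv
  rw [show s⁻¹ • (x - u) - r⁻¹ • (x - v) = (s * r)⁻¹ • ((r - s) • (x - v) - r • (u - v)) by
      match_scalars <;> field_simp; ring,
    real_inner_smul_right, mul_nonneg_iff_of_pos_left (by positivity), inner_sub_right,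
    real_inner_smul_right, real_inner_smul_right, real_inner_self_eq_norm_sq] at h
  have hcs : (r - s) * ⟪u - v, x - v⟫_ℝ ≤ |s - r| * (‖u - v‖ * ‖x - v‖) := by
    rw [← abs_sub_comm]
    exact (le_abs_self _).trans (by rw [abs_mul]; gcongr; exact abs_real_inner_le_norm _ _)
  rcases (norm_nonneg (u - v)).eq_or_lt with h0 | h0
  · rw [← h0]; positivity
  rw [div_mul_eq_mul_div, le_div_iff₀ hr]
  refine le_of_mul_le_mul_right ?_ h0
  linarith

namespace IsResolvent

theorem eq_of_mem (hM : MonotoneOp M) (hs : 0 < s) (hJ : IsResolvent M s J) {x u : H}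
    (hu : s⁻¹ • (x - u) ∈ M u) : J x = u := by
  have h := hM.norm_sub_le_of_mem hs hs (hJ x) hu
  rwa [sub_self, abs_zero, zero_div, zero_mul, norm_le_zero_iff, sub_eq_zero] at h

theorem apply_add_smul (hM : MonotoneOp M) (hs : 0 < s) (hJ : IsResolvent M s J) {z a : H}
    (ha : a ∈ M z) : J (z + s • a) = z :=
  hJ.eq_of_mem hM hs (by rwa [add_sub_cancel_left, inv_smul_smul₀ hs.ne'])

theorem norm_sub_le_of_param (hM : MonotoneOp M) (hs : 0 < s) (hr : 0 < r)
    (hJ : IsResolvent M s J) (hJ' : IsResolvent M r J') (x : H) :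
    ‖J x - J' x‖ ≤ |s - r| / r * ‖x - J' x‖ :=
  hM.norm_sub_le_of_mem hs hr (hJ x) (hJ' x)

theorem norm_sub_sq_le_inner (hM : MonotoneOp M) (hs : 0 < s) (hJ : IsResolvent M s J)
    (x y : H) : ‖J x - J y‖ ^ 2 ≤ ⟪J x - J y, x - y⟫_ℝ :=
  hM.norm_sub_sq_le_inner hs (hJ x) (hJ y)

theorem norm_sub_le (hM : MonotoneOp M) (hs : 0 < s) (hJ : IsResolvent M s J) (x y : H) :
    ‖J x - J y‖ ≤ ‖x - y‖ := by
  have h := (hJ.norm_sub_sq_le_inner hM hs x y).trans (real_inner_le_norm _ _)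
  nlinarith [norm_nonneg (J x - J y), norm_nonneg (x - y)]

theorem norm_apply_le (hM : MonotoneOp M) (hs : 0 < s) (hJ : IsResolvent M s J) (x : H) :
    ‖J x‖ ≤ ‖x‖ + ‖J 0‖ := by
  simpa using (norm_sub_norm_le _ _).trans (hJ.norm_sub_le hM hs x 0)

theorem norm_reflect_sub_le (hM : MonotoneOp M) (hs : 0 < s) (hJ : IsResolvent M s J)
    (x y : H) : ‖(2 • J x - x) - (2 • J y - y)‖ ≤ ‖x - y‖ := by
  have h := hJ.norm_sub_sq_le_inner hM hs x y
  have hsq : ‖(2 • J x - x) - (2 • J y - y)‖ ^ 2 ≤ ‖x - y‖ ^ 2 := by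
    rw [show (2 • J x - x) - (2 • J y - y) = (2 : ℝ) • (J x - J y) - (x - y) by module,
      norm_sub_sq_real, real_inner_smul_left, norm_smul, Real.norm_ofNat]
    nlinarith
  exact (sq_le_sq₀ (norm_nonneg _) (norm_nonneg _)).1 hsq

end IsResolvent

end Resolvent

section DouglasRachford

variable {H : Type*} [NormedAddCommGroup H] [InnerProductSpace ℝ H]
  {A B : H → Set H} {s : ℝ} {JA JB : H → H}

def drStep (JA JB : H → H) (x : H) : H := x + JB (2 • JA x - x) - JA x

/-- `drStep JA JB` averages the identity with the composition of the nonexpansive reflections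
`2 • J - I`. -/
theorem norm_drStep_sub_sq_add_le (hA : MonotoneOp A) (hB : MonotoneOp B) (hs : 0 < s)
    (hJA : IsResolvent A s JA) (hJB : IsResolvent B s JB) (x y : H) :
    ‖drStep JA JB x - drStep JA JB y‖ ^ 2 + ‖(drStep JA JB x - x) - (drStep JA JB y - y)‖ ^ 2 ≤
      ‖x - y‖ ^ 2 := by
  set a := x - y
  set b := (2 • JB (2 • JA x - x) - (2 • JA x - x)) - (2 • JB (2 • JA y - y) - (2 • JA y - y))
  have hba : ‖b‖ ≤ ‖a‖ := (hJB.norm_reflect_sub_le hB hs _ _).trans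
    (hJA.norm_reflect_sub_le hA hs x y)
  have h₁ : drStep JA JB x - drStep JA JB y = (1 / 2 : ℝ) • (a + b) := by
    simp only [drStep, a, b, two_smul]; module
  have h₂ : (drStep JA JB x - x) - (drStep JA JB y - y) = (1 / 2 : ℝ) • (b - a) := by
    simp only [drStep, a, b, two_smul]; module
  rw [h₁, h₂, norm_smul, norm_smul, mul_pow, mul_pow, ← mul_add, norm_sub_rev b,
    parallelogram_law_with_norm ℝ a b]
  norm_num
  nlinarith [norm_nonneg a, norm_nonneg b]

theorem drStep_add_smul (hA : MonotoneOp A) (hB : MonotoneOp B) (hs : 0 < s)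
    (hJA : IsResolvent A s JA) (hJB : IsResolvent B s JB) {z a : H} (ha : a ∈ A z)
    (hb : -a ∈ B z) : drStep JA JB (z + s • a) = z + s • a := by
  have hJAz := hJA.apply_add_smul hA hs ha
  have hJBz := hJB.apply_add_smul hB hs hb
  rw [smul_neg, ← sub_eq_add_neg] at hJBz
  simp only [drStep, hJAz, two_smul, show z + z - (z + s • a) = z - s • a by abel, hJBz]
  abel

end DouglasRachford

section Fejer

theorem exists_tendsto_of_le_add_summable_s13 {d c : ℕ → ℝ} (hd : ∀ k, 0 ≤ d k) (hc : Summable c)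
    (h : ∀ k, d (k + 1) ≤ d k + c k) : ∃ ℓ, Tendsto d atTop (𝓝 ℓ) := by
  set S : ℕ → ℝ := fun k => ∑ j ∈ Finset.range k, c j
  have hS : Tendsto S atTop (𝓝 (∑' j, c j)) := hc.hasSum.tendsto_sum_nat
  obtain ⟨B, hB⟩ := hS.bddAbove_range
  have hanti : Antitone fun k => d k - S k := antitone_nat_of_succ_le fun k => by
    simp only [S, Finset.sum_range_succ]; linarith [h k]
  have hbdd : BddBelow (Set.range fun k => d k - S k) := by
    refine ⟨-B, ?_⟩
    rintro _ ⟨k, rfl⟩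
    linarith [hd k, hB ⟨k, rfl⟩]
  exact ⟨_, by simpa using (tendsto_atTop_ciInf hanti hbdd).add hS⟩

theorem tendsto_norm_sub_of_sq_add_sq_le {E : Type*} [SeminormedAddCommGroup E] {w p : ℕ → E}
    {p₀ : E} (hstep : ∀ k, ‖w (k + 1) - p k‖ ^ 2 + ‖w (k + 1) - w k‖ ^ 2 ≤ ‖w k - p k‖ ^ 2)
    (hp : Summable fun k => ‖p (k + 1) - p k‖) (hp₀ : Tendsto p atTop (𝓝 p₀)) :
    (∃ ℓ, Tendsto (fun k => ‖w k - p₀‖) atTop (𝓝 ℓ)) ∧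
      Tendsto (fun k => ‖w (k + 1) - w k‖) atTop (𝓝 0) := by
  set d : ℕ → ℝ := fun k => ‖w k - p k‖
  set e : ℕ → ℝ := fun k => ‖w (k + 1) - p k‖
  have hed (k : ℕ) : e k ≤ d k :=
    (sq_le_sq₀ (norm_nonneg _) (norm_nonneg _)).1 (by nlinarith [hstep k])
  have hde (k : ℕ) : dist (d (k + 1)) (e k) ≤ ‖p (k + 1) - p k‖ := by
    simpa [d, e, Real.dist_eq, norm_sub_rev (p k)] using
      abs_norm_sub_norm_le (w (k + 1) - p (k + 1)) (w (k + 1) - p k)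
  obtain ⟨ℓ, hℓ⟩ := exists_tendsto_of_le_add_summable_s13 (d := d) (fun k => norm_nonneg _) hp
    fun k => by linarith [hed k, (abs_le.1 ((Real.dist_eq _ _).symm.trans_le (hde k))).2]
  have he : Tendsto e atTop (𝓝 ℓ) := tendsto_of_tendsto_of_dist
    (hℓ.comp (tendsto_add_atTop_nat 1))
    (squeeze_zero (fun _ => dist_nonneg) hde hp.tendsto_atTop_zero)
  refine ⟨⟨ℓ, tendsto_of_tendsto_of_dist hℓ ?_⟩, ?_⟩
  · refine squeeze_zero (fun _ => dist_nonneg) (fun k => ?_)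
      (tendsto_iff_norm_sub_tendsto_zero.1 hp₀)
    simpa [d, Real.dist_eq, norm_sub_rev (p k)] using
      abs_norm_sub_norm_le (w k - p k) (w k - p₀)
  · have hsq : Tendsto (fun k => ‖w (k + 1) - w k‖ ^ 2) atTop (𝓝 0) :=
      squeeze_zero (g := fun k => d k ^ 2 - e k ^ 2) (fun _ => by positivity)
        (fun k => by linarith [hstep k])
        (by simpa using (hℓ.pow 2).sub (he.pow 2))
    simpa using hsq.sqrt

end Fejer

section VaryingParameter

variable {H : Type*} [NormedAddCommGroup H] [InnerProductSpace ℝ H]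
  {M : H → Set H} {t : ℕ → ℝ} {s : ℝ} {J : ℕ → H → H}

theorem exists_isResolvent_of_tendsto [CompleteSpace H] (hM : MonotoneOp M) (hMmax : MaximalOp M)
    (ht : ∀ k, 0 < t k) (hs : 0 < s) (hts : Tendsto t atTop (𝓝 s))
    (hJ : ∀ k, IsResolvent M (t k) (J k)) : ∃ J' : H → H, IsResolvent M s J' := by
  have hlim (x : H) : ∃ y, Tendsto (fun k => J k x) atTop (𝓝 y) := by
    -- `‖J m x - J n x‖ ≤ |t m - t n| * g n` where `g n` converges, hence is bounded
    set g : ℕ → ℝ := fun n => (t n)⁻¹ * ((1 + |t n - t 0| / t 0) * ‖x - J 0 x‖)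
    have hg : Tendsto g atTop (𝓝 (s⁻¹ * ((1 + |s - t 0| / t 0) * ‖x - J 0 x‖))) :=
      (hts.inv₀ hs.ne').mul
        ((((hts.sub_const _).abs.div_const _).const_add _).mul_const _)
    obtain ⟨G, hG⟩ := hg.bddAbove_range
    have hdist (m n : ℕ) : dist (J m x) (J n x) ≤ G * dist (t m) (t n) := by
      have hn : ‖x - J n x‖ ≤ (1 + |t n - t 0| / t 0) * ‖x - J 0 x‖ := by
        have := (hJ n).norm_sub_le_of_param hM (ht n) (ht 0) (hJ 0) x
        linarith [norm_sub_le_norm_sub_add_norm_sub x (J 0 x) (J n x), norm_sub_rev (J 0 x) (J n x)]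
      calc dist (J m x) (J n x)
          ≤ |t m - t n| / t n * ‖x - J n x‖ := by
            rw [dist_eq_norm]; exact (hJ m).norm_sub_le_of_param hM (ht m) (ht n) (hJ n) x
        _ ≤ |t m - t n| / t n * ((1 + |t n - t 0| / t 0) * ‖x - J 0 x‖) := by
            have := ht n; gcongr
        _ = |t m - t n| * g n := by simp only [g]; ring
        _ ≤ G * dist (t m) (t n) := by
            rw [Real.dist_eq, mul_comm]; gcongr; exact hG ⟨n, rfl⟩
    refine cauchySeq_tendsto_of_complete (cauchySeq_iff_tendsto_dist_atTop_0.2 ?_)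
    exact squeeze_zero (fun _ => dist_nonneg) (fun p : ℕ × ℕ => hdist p.1 p.2) (by
      simpa using (cauchySeq_iff_tendsto_dist_atTop_0.1 hts.cauchySeq).const_mul G)
  choose J' hJ' using hlim
  refine ⟨J', fun x => hMmax _ _ fun u v hv => ?_⟩
  exact ge_of_tendsto' (((hJ' x).sub_const u).inner
    (((hts.inv₀ hs.ne').smul (tendsto_const_nhds.sub (hJ' x))).sub_const v))
    fun k => hM _ _ _ _ (hJ k x) hv

theorem tendsto_norm_resolvent_sub (hM : MonotoneOp M) (ht : ∀ k, 0 < t k) (hs : 0 < s)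
    (hts : Tendsto t atTop (𝓝 s)) (hJ : ∀ k, IsResolvent M (t k) (J k)) {J' : H → H}
    (hJ' : IsResolvent M s J') {v : ℕ → H} {C : ℝ} (hv : ∀ k, ‖v k‖ ≤ C) :
    Tendsto (fun k => ‖J k (v k) - J' (v k)‖) atTop (𝓝 0) := by
  have hbound (k : ℕ) : ‖v k - J' (v k)‖ ≤ 2 * C + ‖J' 0‖ := by
    linarith [norm_sub_le (v k) (J' (v k)), hJ'.norm_apply_le hM hs (v k), hv k]
  refine squeeze_zero (fun _ => norm_nonneg _) (fun k =>
    ((hJ k).norm_sub_le_of_param hM (ht k) hs hJ' (v k)).trans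
      (mul_le_mul_of_nonneg_left (hbound k) (div_nonneg (abs_nonneg _) hs.le))) ?_
  simpa using ((hts.sub_const s).abs.div_const s).mul_const (2 * C + ‖J' 0‖)

theorem tendsto_norm_drStep_sub {A B : H → Set H} {JA JB : ℕ → H → H} {JA' JB' : H → H}
    (hA : MonotoneOp A) (hB : MonotoneOp B) (ht : ∀ k, 0 < t k) (hs : 0 < s)
    (hts : Tendsto t atTop (𝓝 s)) (hJA : ∀ k, IsResolvent A (t k) (JA k))
    (hJB : ∀ k, IsResolvent B (t k) (JB k)) (hJA' : IsResolvent A s JA')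
    (hJB' : IsResolvent B s JB') {v : ℕ → H} {C : ℝ} (hv : ∀ k, ‖v k‖ ≤ C) :
    Tendsto (fun k => ‖drStep (JA k) (JB k) (v k) - drStep JA' JB' (v k)‖) atTop (𝓝 0) := by
  set q : ℕ → H := fun k => 2 • JA' (v k) - v k
  have hq (k : ℕ) : ‖q k‖ ≤ 3 * C + 2 * ‖JA' 0‖ := by
    have h₁ := hJA'.norm_apply_le hA hs (v k)
    have h₂ := norm_nsmul_le (n := 2) (a := JA' (v k))
    push_cast at h₂
    linarith [hv k, norm_sub_le (2 • JA' (v k)) (v k)]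
  have hbound (k : ℕ) : ‖drStep (JA k) (JB k) (v k) - drStep JA' JB' (v k)‖ ≤
      3 * ‖JA k (v k) - JA' (v k)‖ + ‖JB k (q k) - JB' (q k)‖ := by
    have h := (hJB k).norm_sub_le hB (ht k) (2 • JA k (v k) - v k) (q k)
    rw [show (2 • JA k (v k) - v k) - q k = (2 : ℝ) • (JA k (v k) - JA' (v k)) by
      simp only [q, two_smul]; module, norm_smul, Real.norm_ofNat] at h
    have e : drStep (JA k) (JB k) (v k) - drStep JA' JB' (v k) =
        (JB k (2 • JA k (v k) - v k) - JB k (q k)) + (JB k (q k) - JB' (q k)) -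
          (JA k (v k) - JA' (v k)) := by
      simp only [drStep, q]; abel
    rw [e]
    linarith [norm_sub_le ((JB k (2 • JA k (v k) - v k) - JB k (q k)) + (JB k (q k) - JB' (q k)))
      (JA k (v k) - JA' (v k)), norm_add_le (JB k (2 • JA k (v k) - v k) - JB k (q k))
      (JB k (q k) - JB' (q k))]
  refine squeeze_zero (fun _ => norm_nonneg _) hbound ?_
  simpa using ((tendsto_norm_resolvent_sub hA ht hs hts hJA hJA' hv).const_mul 3).add
    (tendsto_norm_resolvent_sub hB ht hs hts hJB hJB' hq)


theorem tendsto_norm_drStep_sub_self {A B : H → Set H} {JA JB : ℕ → H → H} {JA' JB' : H → H}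
    {w : ℕ → H} (hA : MonotoneOp A) (hB : MonotoneOp B) (ht : ∀ k, 0 < t k) (hs : 0 < s)
    (hts : Tendsto t atTop (𝓝 s)) (hJA : ∀ k, IsResolvent A (t k) (JA k))
    (hJB : ∀ k, IsResolvent B (t k) (JB k)) (hJA' : IsResolvent A s JA')
    (hJB' : IsResolvent B s JB') (hw : ∀ k, w (k + 1) = drStep (JA k) (JB k) (w k)) {C : ℝ}
    (hC : ∀ k, ‖w k‖ ≤ C) (hreg : Tendsto (fun k => ‖w (k + 1) - w k‖) atTop (𝓝 0)) :
    Tendsto (fun k => ‖drStep JA' JB' (w k) - w k‖) atTop (𝓝 0) :=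
  squeeze_zero (g := fun k => ‖drStep (JA k) (JB k) (w k) - drStep JA' JB' (w k)‖ +
      ‖w (k + 1) - w k‖) (fun _ => norm_nonneg _)
    (fun k => (norm_sub_le_norm_sub_add_norm_sub _ (drStep (JA k) (JB k) (w k)) _).trans_eq
      (by rw [norm_sub_rev, hw k]))
    (by simpa using (tendsto_norm_drStep_sub hA hB ht hs hts hJA hJB hJA' hJB' hC).add hreg)

theorem tendsto_norm_sub_of_drStep {A B : H → Set H} {JA JB : ℕ → H → H} {w : ℕ → H}
    (hA : MonotoneOp A) (hB : MonotoneOp B) (ht : ∀ k, 0 < t k) (hts : Tendsto t atTop (𝓝 s))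
    (htsum : Summable fun k => |t (k + 1) - t k|) (hJA : ∀ k, IsResolvent A (t k) (JA k))
    (hJB : ∀ k, IsResolvent B (t k) (JB k)) (hw : ∀ k, w (k + 1) = drStep (JA k) (JB k) (w k))
    {z a : H} (ha : a ∈ A z) (hb : -a ∈ B z) :
    (∃ ℓ, Tendsto (fun k => ‖w k - (z + s • a)‖) atTop (𝓝 ℓ)) ∧
      Tendsto (fun k => ‖w (k + 1) - w k‖) atTop (𝓝 0) := by
  refine tendsto_norm_sub_of_sq_add_sq_le (p := fun k => z + t k • a) (fun k => ?_) ?_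
    ((hts.smul_const a).const_add z)
  · have h := norm_drStep_sub_sq_add_le hA hB (ht k) (hJA k) (hJB k) (w k) (z + t k • a)
    rwa [drStep_add_smul hA hB (ht k) (hJA k) (hJB k) ha hb, sub_self, sub_zero, ← hw k] at h
  · simpa [← sub_smul, norm_smul] using htsum.mul_right ‖a‖

end VaryingParameter

section WeakConvergence

variable {H : Type} [NormedAddCommGroup H] [InnerProductSpace ℝ H]

namespace WeakConv

variable {x y : ℕ → H} {l m : H}

theorem comp (h : WeakConv x l) {φ : ℕ → ℕ} (hφ : Tendsto φ atTop atTop) :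
    WeakConv (x ∘ φ) l :=
  fun z => (h z).comp hφ

theorem sub (hx : WeakConv x l) (hy : WeakConv y m) : WeakConv (fun k => x k - y k) (l - m) :=
  fun z => by simpa only [inner_sub_left] using (hx z).sub (hy z)

theorem neg (h : WeakConv x l) : WeakConv (fun k => -x k) (-l) :=
  fun z => by simpa only [inner_neg_left] using (h z).neg

theorem const_smul (h : WeakConv x l) (c : ℝ) : WeakConv (fun k => c • x k) (c • l) :=
  fun z => by simpa only [real_inner_smul_left] using (h z).const_mul c

theorem of_tendsto_norm_sub (h : WeakConv x l)
    (hxy : Tendsto (fun k => ‖y k - x k‖) atTop (𝓝 0)) : WeakConv y l := by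
  intro z
  have h₀ : Tendsto (fun k => ⟪y k - x k, z⟫_ℝ) atTop (𝓝 0) :=
    squeeze_zero_norm (fun k => norm_inner_le_norm _ _) (by simpa using hxy.mul_const ‖z‖)
  simpa [inner_sub_left] using (h z).add h₀

theorem of_forall_subseq
    (h : ∀ σ : ℕ → ℕ, Tendsto σ atTop atTop → ∃ ψ : ℕ → ℕ, WeakConv (x ∘ σ ∘ ψ) l) :
    WeakConv x l :=
  fun z => tendsto_of_subseq_tendsto fun σ hσ => (h σ hσ).imp fun _ hψ => hψ z

end WeakConv

/-- Sequential Banach–Alaoglu in the separable closed span of the sequence, read back in `H`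
through the Riesz representation and the orthogonal projection. -/
theorem exists_strictMono_weakConv [CompleteSpace H] {x : ℕ → H} {C : ℝ}
    (hC : ∀ k, ‖x k‖ ≤ C) : ∃ p φ, StrictMono φ ∧ WeakConv (x ∘ φ) p := by
  let K := (Submodule.span ℝ (Set.range x)).topologicalClosure
  have hxK (k : ℕ) : x k ∈ K :=
    Submodule.le_topologicalClosure _ (Submodule.subset_span ⟨k, rfl⟩)
  have : TopologicalSpace.SeparableSpace K :=
    ((Set.countable_range x).isSeparable.span (R := ℝ)).closure.separableSpace
  have : CompleteSpace K :=
    (Submodule.span ℝ (Set.range x)).isClosed_topologicalClosure.completeSpace_coe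
  let ξ (k : ℕ) : WeakDual ℝ K :=
    StrongDual.toWeakDual (InnerProductSpace.toDual ℝ K ⟨x k, hxK k⟩)
  have hξ (k : ℕ) : ξ k ∈ WeakDual.toStrongDual ⁻¹' Metric.closedBall 0 C := by
    have h : ‖InnerProductSpace.toDual ℝ K ⟨x k, hxK k⟩‖ ≤ C := by simpa using hC k
    exact (dist_zero_right _).trans_le h
  obtain ⟨f, -, φ, hφ, hlim⟩ := WeakDual.isSeqCompact_closedBall ℝ K 0 C hξ
  refine ⟨(InnerProductSpace.toDual ℝ K).symm (WeakDual.toStrongDual f), φ, hφ, fun z => ?_⟩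
  have key := ((WeakDual.eval_continuous (K.orthogonalProjectionOnto z)).tendsto f).comp hlim
  rw [← Submodule.inner_orthogonalProjectionOnto_eq_of_mem_left,
    InnerProductSpace.toDual_symm_apply]
  simpa [ξ, Function.comp_def] using key

/-- `⟪w k, u - v⟫` converges, and its limit is both `⟪u, u - v⟫` and `⟪v, u - v⟫`. -/
theorem eq_of_weakConv_comp {w : ℕ → H} {u v : H} {σ τ : ℕ → ℕ}
    (hσ : Tendsto σ atTop atTop) (hτ : Tendsto τ atTop atTop) (hu : WeakConv (w ∘ σ) u)
    (hv : WeakConv (w ∘ τ) v) {ℓu ℓv : ℝ} (hℓu : Tendsto (fun k => ‖w k - u‖) atTop (𝓝 ℓu))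
    (hℓv : Tendsto (fun k => ‖w k - v‖) atTop (𝓝 ℓv)) : u = v := by
  have e (k : ℕ) : ⟪w k, u - v⟫_ℝ = (‖w k - v‖ ^ 2 - ‖w k - u‖ ^ 2 + ‖u‖ ^ 2 - ‖v‖ ^ 2) / 2 := by
    rw [norm_sub_sq_real, norm_sub_sq_real, inner_sub_right]; ring
  have key : Tendsto (fun k => ⟪w k, u - v⟫_ℝ) atTop
      (𝓝 ((ℓv ^ 2 - ℓu ^ 2 + ‖u‖ ^ 2 - ‖v‖ ^ 2) / 2)) := by
    simp only [e]
    exact ((((hℓv.pow 2).sub (hℓu.pow 2)).add_const _).sub_const _).div_const 2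
  have h : ⟪u - v, u - v⟫_ℝ = 0 := by
    rw [inner_sub_left, tendsto_nhds_unique (hu (u - v)) (key.comp hσ),
      tendsto_nhds_unique (hv (u - v)) (key.comp hτ), sub_self]
  exact sub_eq_zero.1 (inner_self_eq_zero.1 h)

/-- Opial's lemma. -/
theorem exists_weakConv_of_forall_tendsto_norm_sub [CompleteSpace H] {w : ℕ → H} {C : ℝ}
    (hC : ∀ k, ‖w k‖ ≤ C)
    (h : ∀ σ : ℕ → ℕ, Tendsto σ atTop atTop → ∀ u, WeakConv (w ∘ σ) u →
      ∃ ℓ, Tendsto (fun k => ‖w k - u‖) atTop (𝓝 ℓ)) : ∃ u, WeakConv w u := by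
  obtain ⟨u, φ, hφ, hu⟩ := exists_strictMono_weakConv hC
  obtain ⟨ℓ, hℓ⟩ := h φ hφ.tendsto_atTop u hu
  refine ⟨u, WeakConv.of_forall_subseq fun σ hσ => ?_⟩
  obtain ⟨v, ψ, hψ, hv⟩ := exists_strictMono_weakConv fun k => hC (σ k)
  have hσψ := hσ.comp hψ.tendsto_atTop
  obtain ⟨ℓ', hℓ'⟩ := h (σ ∘ ψ) hσψ v hv
  exact ⟨ψ, eq_of_weakConv_comp hσψ hφ.tendsto_atTop hv hu hℓ' hℓ ▸ hv⟩

end WeakConvergence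

section DouglasRachfordConvergence

variable {H : Type} [NormedAddCommGroup H] [InnerProductSpace ℝ H] {A B : H → Set H}

/-- The pairings `⟪x k, a k⟫`, `⟪y k, b k⟫` are not weakly continuous; `hxayb` says that their sum
tends to the value `⟪x₀, a₀⟫ + ⟪x₀, -a₀⟫ = 0` it would have if they were. -/
theorem inner_add_inner_nonneg_of_weakConv (hA : MonotoneOp A) (hB : MonotoneOp B)
    {x a y b : ℕ → H} (hxa : ∀ k, a k ∈ A (x k)) (hyb : ∀ k, b k ∈ B (y k)) {x₀ a₀ : H}
    (hx : WeakConv x x₀) (ha : WeakConv a a₀) (hy : WeakConv y x₀) (hb : WeakConv b (-a₀))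
    (hxayb : Tendsto (fun k => ⟪x k, a k⟫_ℝ + ⟪y k, b k⟫_ℝ) atTop (𝓝 0))
    {p q p' q' : H} (hq : q ∈ A p) (hq' : q' ∈ B p') :
    0 ≤ ⟪x₀ - p, a₀ - q⟫_ℝ + ⟪x₀ - p', -a₀ - q'⟫_ℝ := by
  have e (x a y b : H) : ⟪x - p, a - q⟫_ℝ + ⟪y - p', b - q'⟫_ℝ =
      (⟪x, a⟫_ℝ + ⟪y, b⟫_ℝ) - ⟪x, q⟫_ℝ - ⟪a, p⟫_ℝ - ⟪y, q'⟫_ℝ - ⟪b, p'⟫_ℝ +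
        (⟪p, q⟫_ℝ + ⟪p', q'⟫_ℝ) := by
    simp only [inner_sub_left, inner_sub_right, real_inner_comm p, real_inner_comm p']; ring
  rw [e, inner_neg_right, add_neg_cancel]
  refine ge_of_tendsto' ((((((hxayb.sub (hx q)).sub (ha p)).sub (hy q')).sub (hb p')).add_const
    (⟪p, q⟫_ℝ + ⟪p', q'⟫_ℝ))) fun k => ?_
  rw [← e]
  exact add_nonneg (hA _ _ _ _ (hxa k) hq) (hB _ _ _ _ (hyb k) hq')

theorem mem_and_neg_mem_of_inner_add_inner_nonneg (hA : MaximalOp A) (hB : MaximalOp B)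
    {s : ℝ} (hs : 0 < s) {JA : H → H} (hJA : IsResolvent A s JA) {x₀ a₀ : H}
    (h : ∀ p q p' q', q ∈ A p → q' ∈ B p' →
      0 ≤ ⟪x₀ - p, a₀ - q⟫_ℝ + ⟪x₀ - p', -a₀ - q'⟫_ℝ) :
    a₀ ∈ A x₀ ∧ -a₀ ∈ B x₀ := by
  -- against `(JA u, s⁻¹ • (u - JA u)) ∈ gra A` the `A` term is `-s⁻¹ * ‖x₀ - JA u‖ ^ 2 ≤ 0`
  set u := x₀ + s • a₀
  have hB₀ : -a₀ ∈ B x₀ := hB _ _ fun p' q' hq' => by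
    have h₁ := h _ _ p' q' (hJA u) hq'
    have h₂ : ⟪x₀ - JA u, a₀ - s⁻¹ • (u - JA u)⟫_ℝ = -(s⁻¹ * ‖x₀ - JA u‖ ^ 2) := by
      rw [show a₀ - s⁻¹ • (u - JA u) = -(s⁻¹ • (x₀ - JA u)) by
          rw [show u - JA u = (x₀ - JA u) + s • a₀ by simp only [u]; abel, smul_add,
            inv_smul_smul₀ hs.ne']
          abel,
        inner_neg_right, real_inner_smul_right, real_inner_self_eq_norm_sq]
    have : 0 ≤ s⁻¹ * ‖x₀ - JA u‖ ^ 2 := by positivity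
    linarith
  exact ⟨hA _ _ fun p q hq => by simpa using h p q x₀ (-a₀) hq hB₀, hB₀⟩

variable {s : ℝ} {JA JB : H → H} {w : ℕ → H} {C : ℝ}

theorem eq_resolvent_and_mem_of_weakConv (hA : MonotoneOp A) (hAmax : MaximalOp A)
    (hB : MonotoneOp B) (hBmax : MaximalOp B) (hs : 0 < s) (hJA : IsResolvent A s JA) (hJB : IsResolvent B s JB)
    (hC : ∀ k, ‖w k‖ ≤ C) (hres : Tendsto (fun k => ‖drStep JA JB (w k) - w k‖) atTop (𝓝 0))
    {w₀ x₀ : H} (hw : WeakConv w w₀) (hx : WeakConv (fun k => JA (w k)) x₀) :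
    x₀ = JA w₀ ∧ s⁻¹ • (w₀ - x₀) ∈ A x₀ ∧ -(s⁻¹ • (w₀ - x₀)) ∈ B x₀ := by
  set x := fun k => JA (w k)
  set y := fun k => JB (2 • x k - w k)
  have hyx (k : ℕ) : y k - x k = drStep JA JB (w k) - w k := by simp only [drStep, x, y]; abel
  have hδ : Tendsto (fun k => ‖y k - x k‖) atTop (𝓝 0) := by simpa only [← hyx] using hres
  have hy : WeakConv y x₀ := hx.of_tendsto_norm_sub hδ
  have ha : WeakConv (fun k => s⁻¹ • (w k - x k)) (s⁻¹ • (w₀ - x₀)) := (hw.sub hx).const_smul _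
  have hb : WeakConv (fun k => s⁻¹ • ((2 • x k - w k) - y k)) (-(s⁻¹ • (w₀ - x₀))) := by
    refine ha.neg.of_tendsto_norm_sub ?_
    have e (k : ℕ) : s⁻¹ • ((2 • x k - w k) - y k) - -(s⁻¹ • (w k - x k)) =
        -(s⁻¹ • (y k - x k)) := by simp only [two_smul]; module
    simpa [e, norm_smul, abs_of_pos hs] using hδ.const_mul s⁻¹
  have hxayb : Tendsto (fun k => ⟪x k, s⁻¹ • (w k - x k)⟫_ℝ +
      ⟪y k, s⁻¹ • ((2 • x k - w k) - y k)⟫_ℝ) atTop (𝓝 0) := by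
    have e (k : ℕ) : ⟪x k, s⁻¹ • (w k - x k)⟫_ℝ + ⟪y k, s⁻¹ • ((2 • x k - w k) - y k)⟫_ℝ =
        -(s⁻¹ * (⟪y k - x k, w k⟫_ℝ + ‖y k - x k‖ ^ 2)) := by
      rw [← real_inner_self_eq_norm_sq]
      simp only [real_inner_smul_right, inner_sub_left, inner_sub_right, two_smul,
        inner_add_right, real_inner_comm (x k) (y k), real_inner_comm (w k)]
      ring
    have h₁ : Tendsto (fun k => ⟪y k - x k, w k⟫_ℝ) atTop (𝓝 0) :=
      squeeze_zero_norm (fun k => (norm_inner_le_norm _ _).trans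
        (mul_le_mul_of_nonneg_left (hC k) (norm_nonneg _))) (by simpa using hδ.mul_const C)
    simpa [e] using ((h₁.add (hδ.pow 2)).const_mul s⁻¹).neg
  obtain ⟨hA₀, hB₀⟩ := mem_and_neg_mem_of_inner_add_inner_nonneg hAmax hBmax hs hJA
    fun p q p' q' hq hq' => inner_add_inner_nonneg_of_weakConv hA hB (fun k => hJA (w k))
      (fun k => hJB _) hx ha hy hb hxayb hq hq'
  exact ⟨(hJA.eq_of_mem hA hs hA₀).symm, hA₀, hB₀⟩

theorem weakConv_resolvent_of_weakConv [CompleteSpace H] (hA : MonotoneOp A)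
    (hAmax : MaximalOp A) (hB : MonotoneOp B) (hBmax : MaximalOp B) (hs : 0 < s)
    (hJA : IsResolvent A s JA) (hJB : IsResolvent B s JB) (hC : ∀ k, ‖w k‖ ≤ C)
    (hres : Tendsto (fun k => ‖drStep JA JB (w k) - w k‖) atTop (𝓝 0)) {w₀ : H}
    (hw : WeakConv w w₀) :
    WeakConv (fun k => JA (w k)) (JA w₀) ∧
      s⁻¹ • (w₀ - JA w₀) ∈ A (JA w₀) ∧ -(s⁻¹ • (w₀ - JA w₀)) ∈ B (JA w₀) := by
  have hcluster (σ : ℕ → ℕ) (hσ : Tendsto σ atTop atTop) (x₀ : H)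
      (hx₀ : WeakConv (fun k => JA (w (σ k))) x₀) :=
    eq_resolvent_and_mem_of_weakConv hA hAmax hB hBmax hs hJA hJB (fun k => hC (σ k)) (hres.comp hσ)
      (hw.comp hσ) hx₀
  have hx (k : ℕ) : ‖JA (w k)‖ ≤ C + ‖JA 0‖ := by linarith [hJA.norm_apply_le hA hs (w k), hC k]
  obtain ⟨x₀, φ, hφ, hx₀⟩ := exists_strictMono_weakConv hx
  obtain ⟨rfl, hmem⟩ := hcluster φ hφ.tendsto_atTop x₀ hx₀
  refine ⟨WeakConv.of_forall_subseq fun σ hσ => ?_, hmem⟩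
  obtain ⟨x₁, ψ, hψ, hx₁⟩ := exists_strictMono_weakConv fun k => hx (σ k)
  exact ⟨ψ, (hcluster (σ ∘ ψ) (hσ.comp hψ.tendsto_atTop) x₁ hx₁).1 ▸ hx₁⟩

end DouglasRachfordConvergence

/-- Convergence of the non-stationary Douglas–Rachford iteration with varying stepsizes. -/
theorem stmt13 {H : Type} [NormedAddCommGroup H] [InnerProductSpace ℝ H] [CompleteSpace H]
    (A B : H → Set H)
    -- A, B maximal monotone:
    (hAmono : ∀ u₁ v₁ u₂ v₂ : H, v₁ ∈ A u₁ → v₂ ∈ A u₂ → 0 ≤ ⟪u₁ - u₂, v₁ - v₂⟫_ℝ)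
    (hAmax : ∀ u v : H, (∀ u' v' : H, v' ∈ A u' → 0 ≤ ⟪u - u', v - v'⟫_ℝ) → v ∈ A u)
    (hBmono : ∀ u₁ v₁ u₂ v₂ : H, v₁ ∈ B u₁ → v₂ ∈ B u₂ → 0 ≤ ⟪u₁ - u₂, v₁ - v₂⟫_ℝ)
    (hBmax : ∀ u v : H, (∀ u' v' : H, v' ∈ B u' → 0 ≤ ⟪u - u', v - v'⟫_ℝ) → v ∈ B u)
    -- zer(A+B) ≠ ∅:
    (hzer : ∃ x : H, ∃ a b : H, a ∈ A x ∧ b ∈ B x ∧ a + b = 0)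
    -- stepsizes:
    (t : ℕ → ℝ) (ht : ∀ k, 0 < t k) (tlim : ℝ) (htlim : 0 < tlim)
    (htconv : Filter.Tendsto t Filter.atTop (nhds tlim))
    (htsum : Summable (fun k => |t (k + 1) - t k|))
    -- resolvents J_{t_k A} and J_{t_k B}: (1/t_k)(x − JA k x) ∈ A (JA k x), etc.
    (JA JB : ℕ → H → H)
    (hJA : ∀ k x, (t k)⁻¹ • (x - JA k x) ∈ A (JA k x))
    (hJB : ∀ k x, (t k)⁻¹ • (x - JB k x) ∈ B (JB k x))
    -- the iteration:
    (w : ℕ → H)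
    (hw : ∀ k, w (k + 1) = w k + JB k (2 • JA k (w k) - w k) - JA k (w k)) :
    ∃ x : H, (∃ a b : H, a ∈ A x ∧ b ∈ B x ∧ a + b = 0) ∧
      WeakConv (fun k => JA k (w k)) x := by
  obtain ⟨z, a, _, ha, hb, hab⟩ := hzer
  obtain rfl := eq_neg_of_add_eq_zero_right hab
  have hw' : ∀ k, w (k + 1) = drStep (JA k) (JB k) (w k) := hw
  obtain ⟨JAt, hJAt⟩ := exists_isResolvent_of_tendsto hAmono hAmax ht htlim htconv hJA
  obtain ⟨JBt, hJBt⟩ := exists_isResolvent_of_tendsto hBmono hBmax ht htlim htconv hJB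
  have hfejer {z a : H} (ha : a ∈ A z) (hb : -a ∈ B z) :=
    tendsto_norm_sub_of_drStep hAmono hBmono ht htconv htsum hJA hJB hw' ha hb
  obtain ⟨⟨ℓ, hℓ⟩, hreg⟩ := hfejer ha hb
  obtain ⟨R, hR⟩ := hℓ.bddAbove_range
  have hC (k : ℕ) : ‖w k‖ ≤ R + ‖z + tlim • a‖ := by
    linarith [hR ⟨k, rfl⟩, norm_sub_norm_le (w k) (z + tlim • a)]
  have hres := tendsto_norm_drStep_sub_self hAmono hBmono ht htlim htconv hJA hJB hJAt hJBt hw'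
    hC hreg
  have hcluster (σ : ℕ → ℕ) (hσ : Tendsto σ atTop atTop) (u : H) (hu : WeakConv (w ∘ σ) u) :=
    weakConv_resolvent_of_weakConv hAmono hAmax hBmono hBmax htlim hJAt hJBt (fun k => hC (σ k))
      (hres.comp hσ) hu
  obtain ⟨u, hu⟩ := exists_weakConv_of_forall_tendsto_norm_sub hC fun σ hσ u hu => by
    obtain ⟨-, hA', hB'⟩ := hcluster σ hσ u hu
    simpa [smul_inv_smul₀ htlim.ne'] using (hfejer hA' hB').1
  obtain ⟨hX, hA', hB'⟩ := hcluster id tendsto_id u hu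
  exact ⟨JAt u, ⟨_, _, hA', hB', add_neg_cancel _⟩,
    hX.of_tendsto_norm_sub (tendsto_norm_resolvent_sub hAmono ht htlim htconv hJA hJAt hC)⟩
end

section
/- Let A, B, Δ be real N×N matrices with A and B monotone (⟨Tx,x⟩ ≥ 0 for all x) and Δ symmetric positive definite. Then H_Δ := (I + ΔA)⁻¹(ΔA + (I + ΔB)⁻¹(I − ΔA)) satisfies H_Δ = (I + ΔA + ΔB + ΔBΔA)⁻¹(I + ΔBΔA), and every eigenvalue λ ∈ ℂ of H_Δ with λ ≠ 1 and eigenvector z satisfies |λ − 1/2| ≤ √(1/4 − c/(1+2c)) ≤ 1/2, where c := Re⟨Az, z⟩ / (‖z‖²_{Δ⁻¹} + ‖Az‖²_Δ) ≥ 0. -/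
/-!
Write `P = ΔA` and `Q = ΔB`. Since `1 + P + Q + QP = (1 + Q)(1 + P)`, an eigenpair
`H_Δ z = λ z` means `(1 + QP) z = λ (1 + Q)(1 + P) z`. With `w = ΔAz` this says that
`p = λ z - (1 - λ) w` satisfies `ΔBp = (1 - λ) z - λ w`, so monotonicity of `B` at `p`,
expanded with `Δ = Δᴴ`, reads
`Re⟨Az, z⟩ (|λ|² + |1 - λ|²) ≤ (Re λ - |λ|²) (‖z‖²_{Δ⁻¹} + ‖Az‖²_Δ)`.
Completing the square turns this into `|λ - 1/2|² ≤ 1/4 - c / (1 + 2c)`.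
The real hypotheses pass to `ℂ^N` because a real quadratic form evaluated at `z` is the sum of
its values at `Re z` and `Im z`.
-/

open Matrix ComplexOrder

open Complex in
lemma norm_sub_half_le_sqrt {lam : ℂ} {a s : ℝ} (ha : 0 < a) (hs : 0 ≤ s)
    (h : s * (normSq lam + normSq (1 - lam)) ≤ (lam.re - normSq lam) * a) :
    ‖lam - 1 / 2‖ ≤ √(1 / 4 - s / a / (1 + 2 * (s / a))) := by
  have hpos : 0 < a + 2 * s := by linarith
  have hquad : normSq (lam - 1 / 2) * (a + 2 * s) ≤ (a + 2 * s) / 4 - s := by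
    simp only [normSq_apply, sub_re, sub_im, one_re, one_im] at h ⊢
    norm_num at h ⊢
    nlinarith [h]
  have hbound : 1 / 4 - s / a / (1 + 2 * (s / a)) = ((a + 2 * s) / 4 - s) / (a + 2 * s) := by
    field_simp
  rw [hbound, Complex.norm_def]
  exact Real.sqrt_le_sqrt ((le_div_iff₀ hpos).mpr hquad)

lemma sqrt_quarter_sub_le_half {c : ℝ} (hc : 0 ≤ c) : √(1 / 4 - c / (1 + 2 * c)) ≤ 1 / 2 := by
  rw [Real.sqrt_le_left (by norm_num)]
  have : 0 ≤ c / (1 + 2 * c) := by positivity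
  linarith

namespace Matrix

variable {n : Type*} [Fintype n]

section CommRing

variable [DecidableEq n] {R : Type*} [CommRing R]

lemma map_inv_of_isUnit_det {S : Type*} [CommRing S] (f : R →+* S) {M : Matrix n n R}
    (hM : IsUnit M.det) : M⁻¹.map f = (M.map f)⁻¹ := by
  refine (inv_eq_left_inv ?_).symm
  rw [← Matrix.map_mul, nonsing_inv_mul _ hM, Matrix.map_one _ f.map_zero f.map_one]

/-- `H_Δ` of the paper is `douglasRachford (Δ * A) (Δ * B)`. -/
noncomputable def douglasRachford (P Q : Matrix n n R) : Matrix n n R :=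
  (1 + P)⁻¹ * (P + (1 + Q)⁻¹ * (1 - P))

variable {P Q : Matrix n n R}

lemma douglasRachford_eq (hQ : IsUnit (1 + Q).det) :
    douglasRachford P Q = (1 + P + Q + Q * P)⁻¹ * (1 + Q * P) := by
  have hfactor : 1 + P + Q + Q * P = (1 + Q) * (1 + P) := by noncomm_ring
  have hmid : P + (1 + Q)⁻¹ * (1 - P) = (1 + Q)⁻¹ * (1 + Q * P) := by
    calc P + (1 + Q)⁻¹ * (1 - P) = (1 + Q)⁻¹ * ((1 + Q) * P + (1 - P)) := by
          rw [mul_add, nonsing_inv_mul_cancel_left _ P hQ]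
      _ = (1 + Q)⁻¹ * (1 + Q * P) := by noncomm_ring
  rw [douglasRachford, hmid, hfactor, mul_inv_rev, mul_assoc]

lemma one_add_mul_one_add_mul_douglasRachford (hP : IsUnit (1 + P).det)
    (hQ : IsUnit (1 + Q).det) : (1 + Q) * (1 + P) * douglasRachford P Q = 1 + Q * P := by
  have hfactor : 1 + P + Q + Q * P = (1 + Q) * (1 + P) := by noncomm_ring
  rw [douglasRachford_eq hQ, hfactor,
    mul_nonsing_inv_cancel_left _ (1 + Q * P) (by rw [det_mul]; exact hQ.mul hP)]

lemma map_mulVec_eq_smul_of_douglasRachford {S : Type*} [CommRing S] (f : R →+* S)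
    (hP : IsUnit (1 + P).det) (hQ : IsUnit (1 + Q).det) {lam : S} {z : n → S}
    (h : (douglasRachford P Q).map f *ᵥ z = lam • z) :
    (1 + Q * P).map f *ᵥ z = lam • (((1 + Q) * (1 + P)).map f *ᵥ z) := by
  rw [← one_add_mul_one_add_mul_douglasRachford hP hQ, Matrix.map_mul, ← mulVec_mulVec, h,
    mulVec_smul]

end CommRing

section Real

lemma re_star_dotProduct_map_ofReal_mulVec (M : Matrix n n ℝ) (z : n → ℂ) :
    (star z ⬝ᵥ M.map Complex.ofReal *ᵥ z).re
      = M *ᵥ (fun i => (z i).re) ⬝ᵥ (fun i => (z i).re)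
        + M *ᵥ (fun i => (z i).im) ⬝ᵥ (fun i => (z i).im) := by
  simp only [dotProduct, mulVec, Matrix.map_apply, Pi.star_apply, Finset.mul_sum,
    Finset.sum_mul, Complex.re_sum, ← Finset.sum_add_distrib]
  refine Finset.sum_congr rfl fun i _ => Finset.sum_congr rfl fun j _ => ?_
  simp only [Complex.mul_re, Complex.mul_im, Complex.ofReal_re, Complex.ofReal_im,
    RCLike.star_def, Complex.conj_re, Complex.conj_im]
  ring

lemma re_star_dotProduct_map_ofReal_mulVec_nonneg {M : Matrix n n ℝ}
    (hM : ∀ x, 0 ≤ M *ᵥ x ⬝ᵥ x) (z : n → ℂ) :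
    0 ≤ (star z ⬝ᵥ M.map Complex.ofReal *ᵥ z).re := by
  rw [re_star_dotProduct_map_ofReal_mulVec]
  exact add_nonneg (hM _) (hM _)

lemma PosDef.map_ofReal {M : Matrix n n ℝ} (hM : M.PosDef) : (M.map Complex.ofReal).PosDef := by
  have hpos (x : n → ℝ) (hx : x ≠ 0) : 0 < M *ᵥ x ⬝ᵥ x := by
    simpa [dotProduct_comm] using hM.dotProduct_mulVec_pos hx
  have hnonneg (x : n → ℝ) : 0 ≤ M *ᵥ x ⬝ᵥ x := by
    simpa [dotProduct_comm] using hM.posSemidef.dotProduct_mulVec_nonneg x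
  have hherm : (M.map Complex.ofReal).IsHermitian :=
    hM.isHermitian.map _ fun _ => by simp
  refine posDef_iff_dotProduct_mulVec.mpr ⟨hherm, fun z hz => Complex.lt_def.mpr ⟨?_, ?_⟩⟩
  · rw [Complex.zero_re, re_star_dotProduct_map_ofReal_mulVec]
    by_cases hre : (fun i => (z i).re) = 0
    · have him : (fun i => (z i).im) ≠ 0 := fun him =>
        hz (funext fun i => Complex.ext (congrFun hre i) (congrFun him i))
      linarith [hpos _ him, hnonneg fun i => (z i).re]
    · linarith [hpos _ hre, hnonneg fun i => (z i).im]
  · exact (hherm.im_star_dotProduct_mulVec_self z).symm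

lemma isUnit_det_one_add_mul [DecidableEq n] {Δ T : Matrix n n ℝ} (hΔ : Δ.PosDef)
    (hT : ∀ x, 0 ≤ T *ᵥ x ⬝ᵥ x) : IsUnit (1 + Δ * T).det := by
  rw [isUnit_iff_ne_zero]
  intro h
  obtain ⟨v, hv, hker⟩ := exists_mulVec_eq_zero_iff.mpr h
  -- `(1 + ΔT) v = 0` gives `Δ⁻¹ v = -T v`, against positivity of `Δ⁻¹ + T`.
  have hsum : Δ⁻¹ *ᵥ v + T *ᵥ v = 0 := by
    have := congrArg (Δ⁻¹ *ᵥ ·) hker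
    simpa only [add_mulVec, one_mulVec, mulVec_add, mulVec_mulVec,
      nonsing_inv_mul_cancel_left _ T hΔ.det_pos.ne'.isUnit, mulVec_zero] using this
  have hpos : 0 < Δ⁻¹ *ᵥ v ⬝ᵥ v := by
    simpa [dotProduct_comm] using hΔ.inv.dotProduct_mulVec_pos hv
  have := congrArg (· ⬝ᵥ v) hsum
  simp only [add_dotProduct, zero_dotProduct] at this
  linarith [hT v]

end Real

section Complex

variable [DecidableEq n]

open Complex in
lemma re_star_dotProduct_mulVec_mul_le_of_mulVec_eq_smul {A B Δ : Matrix n n ℂ}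
    (hB : ∀ x, 0 ≤ (star x ⬝ᵥ B *ᵥ x).re) (hΔ : Δ.IsHermitian) (hΔu : IsUnit Δ.det)
    {lam : ℂ} {z : n → ℂ}
    (heig : (1 + Δ * B * (Δ * A)) *ᵥ z = lam • (((1 + Δ * B) * (1 + Δ * A)) *ᵥ z)) :
    (star z ⬝ᵥ A *ᵥ z).re * (normSq lam + normSq (1 - lam)) ≤
      (lam.re - normSq lam) *
        ((star z ⬝ᵥ Δ⁻¹ *ᵥ z).re + (star (A *ᵥ z) ⬝ᵥ Δ *ᵥ A *ᵥ z).re) := by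
  set u := A *ᵥ z with hu
  set w := Δ *ᵥ u with hw
  have hexp : z + Δ *ᵥ B *ᵥ w = lam • (z + w + Δ *ᵥ B *ᵥ z + Δ *ᵥ B *ᵥ w) := by
    simp only [add_mul, mul_add, one_mul, mul_one, add_mulVec, one_mulVec, ← mulVec_mulVec,
      ← hu, ← hw] at heig
    linear_combination (norm := module) heig
  set p := lam • z - (1 - lam) • w
  have hΔBp : Δ *ᵥ B *ᵥ p = (1 - lam) • z - lam • w := by
    simp only [p, mulVec_sub, mulVec_smul]
    linear_combination (norm := module) (-1 : ℂ) • hexp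
  have hinv (v : n → ℂ) : Δ⁻¹ *ᵥ Δ *ᵥ v = v := by
    rw [mulVec_mulVec, nonsing_inv_mul _ hΔu, one_mulVec]
  have hBp : B *ᵥ p = (1 - lam) • Δ⁻¹ *ᵥ z - lam • u := by
    rw [← hinv (B *ᵥ p), hΔBp, mulVec_sub, mulVec_smul, mulVec_smul, hinv]
  have hwz : star w ⬝ᵥ Δ⁻¹ *ᵥ z = star (star z ⬝ᵥ u) := by
    rw [star_mulVec, hΔ.eq, ← dotProduct_mulVec, mulVec_mulVec, mul_nonsing_inv _ hΔu,
      one_mulVec, star_dotProduct]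
  have hwu : star w ⬝ᵥ u = star u ⬝ᵥ Δ *ᵥ u := by
    rw [star_mulVec, hΔ.eq, ← dotProduct_mulVec]
  have hα : (star z ⬝ᵥ Δ⁻¹ *ᵥ z).im = 0 := hΔ.inv.im_star_dotProduct_mulVec_self z
  have hδ : (star u ⬝ᵥ Δ *ᵥ u).im = 0 := hΔ.im_star_dotProduct_mulVec_self u
  have hform : star p ⬝ᵥ B *ᵥ p = star lam * (1 - lam) * (star z ⬝ᵥ Δ⁻¹ *ᵥ z)
      - star lam * lam * (star z ⬝ᵥ u) - star (1 - lam) * (1 - lam) * star (star z ⬝ᵥ u)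
      + star (1 - lam) * lam * (star u ⬝ᵥ Δ *ᵥ u) := by
    simp only [hBp, p, star_sub, star_smul, sub_dotProduct, dotProduct_sub, smul_dotProduct,
      dotProduct_smul, smul_eq_mul, hwz, hwu]
    ring
  have hmono := hB p
  rw [hform] at hmono
  simp only [sub_re, add_re, mul_re, mul_im, sub_im, star_def, conj_re, conj_im, one_re, one_im,
    hα, hδ] at hmono
  simp only [normSq_apply, sub_re, sub_im, one_re, one_im]
  nlinarith [hmono]

end Complex

end Matrix

/-- Eigenvalue localization for the linear Douglas–Rachford operator H_Δ. -/
theorem stmt14 {N : ℕ} (A B Δ : Matrix (Fin N) (Fin N) ℝ)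
    (hA : ∀ x : Fin N → ℝ, 0 ≤ A.mulVec x ⬝ᵥ x)
    (hB : ∀ x : Fin N → ℝ, 0 ≤ B.mulVec x ⬝ᵥ x)
    (hΔ : Δ.PosDef) :
    ((1 + Δ * A)⁻¹ * (Δ * A + (1 + Δ * B)⁻¹ * (1 - Δ * A)) =
      (1 + Δ * A + Δ * B + Δ * B * (Δ * A))⁻¹ * (1 + Δ * B * (Δ * A))) ∧
    (∀ (lam : ℂ) (z : Fin N → ℂ), z ≠ 0 → lam ≠ 1 →
      (((1 + Δ * A)⁻¹ * (Δ * A + (1 + Δ * B)⁻¹ * (1 - Δ * A))).map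
        Complex.ofReal).mulVec z = lam • z →
      -- c := Re⟨Az, z⟩ / (‖z‖²_{Δ⁻¹} + ‖Az‖²_Δ)
      (let Az := (A.map Complex.ofReal).mulVec z
       let c := ((star z) ⬝ᵥ Az).re /
        (((star z) ⬝ᵥ ((Δ⁻¹.map Complex.ofReal).mulVec z)).re +
         ((star Az) ⬝ᵥ ((Δ.map Complex.ofReal).mulVec Az)).re)
       0 ≤ c ∧
       ‖lam - 1 / 2‖ ≤ Real.sqrt (1 / 4 - c / (1 + 2 * c)) ∧
       Real.sqrt (1 / 4 - c / (1 + 2 * c)) ≤ 1 / 2)) := by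
  have hdA := isUnit_det_one_add_mul hΔ hA
  have hdB := isUnit_det_one_add_mul hΔ hB
  refine ⟨douglasRachford_eq hdB, fun lam z hz _ heig => ?_⟩
  have hΔc := hΔ.map_ofReal
  have heig' := map_mulVec_eq_smul_of_douglasRachford Complex.ofRealHom hdA hdB heig
  simp only [← RingHom.mapMatrix_apply, map_add, map_mul, map_one] at heig'
  have key := re_star_dotProduct_mulVec_mul_le_of_mulVec_eq_smul
    (re_star_dotProduct_map_ofReal_mulVec_nonneg hB)
    hΔc.isHermitian hΔc.det_pos.ne'.isUnit heig'
  have hinv : Δ⁻¹.map Complex.ofReal = (Δ.map Complex.ofReal)⁻¹ :=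
    map_inv_of_isUnit_det Complex.ofRealHom hΔ.det_pos.ne'.isUnit
  rw [← hinv] at key
  have hα := hΔ.inv.map_ofReal.re_dotProduct_pos hz
  have hδ := hΔc.posSemidef.re_dotProduct_nonneg (A.map Complex.ofReal *ᵥ z)
  have hden := add_pos_of_pos_of_nonneg hα hδ
  have hs := re_star_dotProduct_map_ofReal_mulVec_nonneg hA z
  have hc := div_nonneg hs hden.le
  exact ⟨hc, norm_sub_half_le_sqrt hden hs key, sqrt_quarter_sub_le_half hc⟩
end

section
/- Let A, B ∈ ℝ^{N×N} be monotone matrices and Δ ∈ ℝ^{N×N} symmetric positive definite. Define F_Δ := I + J_{ΔB}(2J_{ΔA} − I) − J_{ΔA} and H_Δ := J_{ΔA}(ΔA + J_{ΔB}(I − ΔA)), where J_M = (I+M)⁻¹. Then F_Δ = (I + ΔA) H_Δ (I + ΔA)⁻¹; in particular F_Δ and H_Δ are similar and have the same eigenvalues. -/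
/-!
If `x = -Δ (A x)` then `0 ≤ ⟨A x, x⟩ = -⟨A x, Δ (A x)⟩ ≤ 0`, so `A x = 0` and `x = 0`: monotonicity of
`A` and positive definiteness of `Δ` make `1 + ΔA` invertible. Multiplying out with `J_{ΔA} (1 + ΔA) = 1`
gives `F_Δ (1 + ΔA) = ΔA + J_{ΔB} (1 - ΔA) = (1 + ΔA) H_Δ`, a ring identity in which `J_{ΔB}` is arbitrary,
and conjugate matrices have the same spectrum.
-/

open Matrix

theorem isUnit_one_add_mul_of_posDef {n : Type*} [Fintype n] [DecidableEq n]
    {Δ A : Matrix n n ℝ} (hΔ : Δ.PosDef) (hA : ∀ x : n → ℝ, 0 ≤ A *ᵥ x ⬝ᵥ x) :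
    IsUnit (1 + Δ * A) := by
  rw [isUnit_iff_isUnit_det, isUnit_iff_ne_zero, Ne, ← exists_mulVec_eq_zero_iff]
  rintro ⟨x, hx0, hx⟩
  have hxy : x = -(Δ *ᵥ (A *ᵥ x)) := by
    rw [add_mulVec, one_mulVec, ← mulVec_mulVec] at hx
    exact eq_neg_of_add_eq_zero_left hx
  have hAx : A *ᵥ x = 0 := by
    by_contra hne
    have hpos := hΔ.dotProduct_mulVec_pos hne
    have hnonneg := hA x
    nth_rw 2 [hxy] at hnonneg
    rw [dotProduct_neg] at hnonneg
    rw [star_trivial] at hpos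
    linarith
  exact hx0 (by rw [hxy, hAx, mulVec_zero, neg_zero])

theorem douglasRachford_eq_conj {R : Type*} [Ring R] {a ja jb : R}
    (hleft : ja * (1 + a) = 1) (hright : (1 + a) * ja = 1) :
    1 + jb * (2 • ja - 1) - ja = (1 + a) * (ja * (a + jb * (1 - a))) * ja := by
  have hmul : (1 + jb * (2 • ja - 1) - ja) * (1 + a) = a + jb * (1 - a) := by
    have h2 : (2 • ja - 1) * (1 + a) = 1 - a := by
      rw [sub_mul, smul_mul_assoc, hleft]; noncomm_ring
    rw [sub_mul, add_mul, mul_assoc, h2, hleft]; noncomm_ring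
  rw [← mul_assoc, hright, one_mul, ← hmul, mul_assoc, hright, mul_one]

theorem spectrum_map_conj {n R S 𝕜 : Type*} [Fintype n] [DecidableEq n] [CommRing R]
    [CommRing S] [CommSemiring 𝕜] [Algebra 𝕜 S] (f : R →+* S) {P H : Matrix n n R}
    (hP : IsUnit P) : spectrum 𝕜 ((P * H * P⁻¹).map f) = spectrum 𝕜 (H.map f) := by
  lift P to (Matrix n n R)ˣ using hP with u
  rw [← coe_units_inv]
  simpa [Matrix.map_mul] using
    spectrum.units_conjugate (R := 𝕜) (a := H.map f) (u := Units.map f.mapMatrix.toMonoidHom u)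

theorem stmt15_general {N : ℕ} (A B Δ : Matrix (Fin N) (Fin N) ℝ)
    (hA : ∀ x : Fin N → ℝ, 0 ≤ A.mulVec x ⬝ᵥ x)
    (hΔ : Δ.PosDef) :
    (let JA := (1 + Δ * A)⁻¹
     let JB := (1 + Δ * B)⁻¹
     let F := 1 + JB * (2 • JA - 1) - JA
     let Hm := JA * (Δ * A + JB * (1 - Δ * A))
     F = (1 + Δ * A) * Hm * (1 + Δ * A)⁻¹ ∧
     spectrum ℂ (F.map Complex.ofReal) = spectrum ℂ (Hm.map Complex.ofReal)) := by
  intro JA JB F Hm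
  have hunit := isUnit_one_add_mul_of_posDef hΔ hA
  have hdet := (isUnit_iff_isUnit_det _).mp hunit
  have hconj : F = (1 + Δ * A) * Hm * (1 + Δ * A)⁻¹ :=
    douglasRachford_eq_conj (nonsing_inv_mul _ hdet) (mul_nonsing_inv _ hdet)
  exact ⟨hconj, hconj ▸ spectrum_map_conj Complex.ofRealHom hunit⟩

/-- Similarity of the Douglas–Rachford iteration matrix F_Δ and the reduced matrix H_Δ:
F_Δ = (I + ΔA) H_Δ (I + ΔA)⁻¹; in particular they have the same eigenvalues. -/
theorem stmt15 {N : ℕ} (A B Δ : Matrix (Fin N) (Fin N) ℝ)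
    (hA : ∀ x : Fin N → ℝ, 0 ≤ A.mulVec x ⬝ᵥ x)
    (hB : ∀ x : Fin N → ℝ, 0 ≤ B.mulVec x ⬝ᵥ x)
    (hΔ : Δ.PosDef) :
    (let JA := (1 + Δ * A)⁻¹
     let JB := (1 + Δ * B)⁻¹
     let F := 1 + JB * (2 • JA - 1) - JA
     let Hm := JA * (Δ * A + JB * (1 - Δ * A))
     F = (1 + Δ * A) * Hm * (1 + Δ * A)⁻¹ ∧
     spectrum ℂ (F.map Complex.ofReal) = spectrum ℂ (Hm.map Complex.ofReal)) :=
  stmt15_general A B Δ hA hΔ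
end

section
/- For λ = x + iy ∈ ℂ and c ≥ 0, if (|λ|² + |λ−1|²)·c ≤ −Re(λ(λ̄ − 1)), then |λ − 1/2|² ≤ 1/4 − c/(1+2c). -/
/-!
With `r = ‖λ - 1/2‖²`, the parallelogram law gives `‖λ‖² + ‖λ - 1‖² = 2r + 1/2`, and
`λ(λ̄ - 1) = ‖λ‖² - λ` gives `-Re(λ(λ̄ - 1)) = 1/4 - r`. The hypothesis thus becomes the
linear inequality `(2r + 1/2)c ≤ 1/4 - r`, i.e. `r(1 + 2c) ≤ 1/4 - c/2`.
-/

namespace Complex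

theorem sq_norm_add_sq_norm_sub_one (z : ℂ) :
    ‖z‖ ^ 2 + ‖z - 1‖ ^ 2 = 2 * ‖z - 1 / 2‖ ^ 2 + 1 / 2 := by
  have := parallelogram_law_with_norm ℂ (z - 1 / 2) (1 / 2)
  rw [sub_add_cancel, sub_sub, add_halves] at this
  norm_num at this
  linear_combination this

theorem neg_re_mul_conj_sub_one (z : ℂ) :
    -(z * (starRingEnd ℂ z - 1)).re = 1 / 4 - ‖z - 1 / 2‖ ^ 2 := by
  rw [Complex.sq_norm, normSq_apply]
  simp only [mul_re, sub_re, sub_im, conj_re, conj_im, one_re, one_im, div_ofNat_re,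
    div_ofNat_im]
  ring

end Complex

/-- Algebraic core of the eigenvalue localization: if
(|λ|² + |λ−1|²)·c ≤ −Re(λ(λ̄ − 1)) with c ≥ 0, then |λ − 1/2|² ≤ 1/4 − c/(1+2c). -/
theorem stmt17 (lam : ℂ) (c : ℝ) (hc : 0 ≤ c)
    (h : (‖lam‖ ^ 2 + ‖lam - 1‖ ^ 2) * c ≤
      -(lam * ((starRingEnd ℂ) lam - 1)).re) :
    ‖lam - 1 / 2‖ ^ 2 ≤ 1 / 4 - c / (1 + 2 * c) := by
  rw [Complex.sq_norm_add_sq_norm_sub_one, Complex.neg_re_mul_conj_sub_one] at h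
  have hpos : 0 < 1 + 2 * c := by linarith
  rw [le_sub_comm, div_le_iff₀ hpos]
  linarith
end

section
/- Let (t_k) be a sequence of positive reals defined by t_{k+1} = [(1 − ω_k) + ω_k · proj_{[a,b]}(r_k)] t_k, where 0 < a ≤ b < ∞, r_k ≥ 0 arbitrary, ω_0 = 1, (ω_k) ∈ (0,1]^ℕ with ∑_k ω_k < ∞, and t_0 > 0. Then (t_k) converges to some t > 0 and ∑_k |t_{k+1} − t_k| < ∞. -/
/-!
Writing `m k = (1 - ω k) + ω k c k` for the multiplicative factor, the clipped ratio `c k` lies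
in `[a, b]`, so `m k > 0` and `|m k - 1| = ω k |c k - 1| ≤ (b + 1) ω k` is summable. Hence
`∑ log (m k)` converges, the partial products `t k = t 0 ∏_{j<k} m j` converge to
`t 0 · exp (∑ log m k) > 0`, and `|t (k+1) - t k| = |m k - 1| t k` is summable because the
convergent sequence `t` is bounded.
-/

open Filter Topology Finset

section MultiplicativeRecursion

variable {m t : ℕ → ℝ}

lemma eq_mul_prod_range_of_succ_eq_mul (hrec : ∀ k, t (k + 1) = m k * t k) (k : ℕ) :
    t k = t 0 * ∏ j ∈ range k, m j := by
  induction k with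
  | zero => simp
  | succ k ih => rw [hrec k, ih, prod_range_succ]; ring

lemma exists_pos_tendsto_of_succ_eq_mul (hm : ∀ k, 0 < m k)
    (hm1 : Summable fun k => m k - 1) (ht0 : 0 < t 0) (hrec : ∀ k, t (k + 1) = m k * t k) :
    ∃ tl, 0 < tl ∧ Tendsto t atTop (𝓝 tl) := by
  have hlog : Summable fun k => Real.log (m k) := by
    simpa using Real.summable_log_one_add_of_summable hm1
  have hprod := (Real.hasProd_of_hasSum_log hm hlog.hasSum).tendsto_prod_nat
  refine ⟨t 0 * Real.exp (∑' k, Real.log (m k)), by positivity, ?_⟩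
  exact (hprod.const_mul (t 0)).congr fun k => (eq_mul_prod_range_of_succ_eq_mul hrec k).symm

lemma summable_abs_sub_of_succ_eq_mul {tl : ℝ} (ht : Tendsto t atTop (𝓝 tl))
    (hm1 : Summable fun k => |m k - 1|) (hrec : ∀ k, t (k + 1) = m k * t k) :
    Summable fun k => |t (k + 1) - t k| := by
  obtain ⟨C, hC⟩ := isBounded_iff_forall_norm_le.1 (Metric.isBounded_range_of_tendsto t ht)
  refine (hm1.mul_right C).of_nonneg_of_le (fun k => abs_nonneg _) fun k => ?_
  rw [hrec k, ← sub_one_mul, abs_mul]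
  exact mul_le_mul_of_nonneg_left (hC _ ⟨k, rfl⟩) (abs_nonneg _)

end MultiplicativeRecursion

theorem stmt19_general (a b : ℝ) (ha : 0 < a) (hab : a ≤ b)
    (ω : ℕ → ℝ) (hωpos : ∀ k, 0 < ω k) (hωle : ∀ k, ω k ≤ 1)
    (hωsum : Summable ω)
    (r : ℕ → ℝ)
    (t : ℕ → ℝ) (ht0 : 0 < t 0)
    (hrec : ∀ k, t (k + 1) = ((1 - ω k) + ω k * min (max (r k) a) b) * t k) :
    ∃ tl : ℝ, 0 < tl ∧ Filter.Tendsto t Filter.atTop (nhds tl) ∧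
      Summable (fun k => |t (k + 1) - t k|) := by
  set c : ℕ → ℝ := fun k => min (max (r k) a) b
  have hca : ∀ k, a ≤ c k := fun k => le_min (le_max_right _ _) hab
  have hcb : ∀ k, c k ≤ b := fun k => min_le_right _ _
  set m : ℕ → ℝ := fun k => (1 - ω k) + ω k * c k
  have hm : ∀ k, 0 < m k := fun k =>
    add_pos_of_nonneg_of_pos (sub_nonneg.2 (hωle k)) (mul_pos (hωpos k) (ha.trans_le (hca k)))
  have hm1 : Summable fun k => |m k - 1| := by
    refine (hωsum.mul_right (b + 1)).of_nonneg_of_le (fun k => abs_nonneg _) fun k => ?_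
    have hsub : m k - 1 = ω k * (c k - 1) := by ring
    rw [hsub, abs_mul, abs_of_pos (hωpos k)]
    refine mul_le_mul_of_nonneg_left (abs_sub_le_iff.2 ⟨?_, ?_⟩) (hωpos k).le <;>
      linarith [hca k, hcb k]
  obtain ⟨tl, htl, ht⟩ := exists_pos_tendsto_of_succ_eq_mul hm hm1.of_abs ht0 hrec
  exact ⟨tl, htl, ht, summable_abs_sub_of_succ_eq_mul ht hm1 hrec⟩

/-- The safeguarded adaptive stepsize sequence
t_{k+1} = [(1 − ω_k) + ω_k proj_{[a,b]}(r_k)] t_k converges to a positive limit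
and has summable increments. -/
theorem stmt19 (a b : ℝ) (ha : 0 < a) (hab : a ≤ b)
    (ω : ℕ → ℝ) (hω0 : ω 0 = 1) (hωpos : ∀ k, 0 < ω k) (hωle : ∀ k, ω k ≤ 1)
    (hωsum : Summable ω)
    (r : ℕ → ℝ) (hr : ∀ k, 0 ≤ r k)
    (t : ℕ → ℝ) (ht0 : 0 < t 0)
    (hrec : ∀ k, t (k + 1) = ((1 - ω k) + ω k * min (max (r k) a) b) * t k) :
    ∃ tl : ℝ, 0 < tl ∧ Filter.Tendsto t Filter.atTop (nhds tl) ∧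
      Summable (fun k => |t (k + 1) - t k|) :=
  stmt19_general a b ha hab ω hωpos hωle hωsum r t ht0 hrec
end
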